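/- arXiv:1106.4582 — 8 statements merged into one kernel-verified Lean document; each statement's English description precedes it below -/
import Mathlib

section
/- Let D ≥ 2 and ℓ ≥ 1 be integers and let η ∈ [0,1] satisfy (D-1)(ℓ-1+η) > 1. Consider the polynomial p(x) = 1 - (D-1)(x + x² + ⋯ + x^{ℓ-1} + η x^{ℓ}). Then p has exactly one root x₁ in the real interval (0,1); this root satisfies x₁ > 1/D; x₁ is a simple root of p; and every other complex root z of p satisfies |z| > x₁. -/
/-!
Write `p = 1 - q`, where `q = (D-1)(x + ⋯ + x^{ℓ-1} + η x^ℓ)` has nonnegative coefficients and a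
positive linear coefficient (for `ℓ = 1` this is `(D-1)η`, positive by the hypothesis). Then `q` is
strictly increasing on `[0, ∞)` with `q 0 = 0 < 1 < q 1`, which gives the unique root `x₁` of `p` in
`(0,1)`; `q' > 0` there, so the root is simple; and `(D-1) ∑_{j=1}^{ℓ} D^{-j} = 1 - D^{-ℓ} < 1`
gives `q (1/D) < 1`, i.e. `1/D < x₁`. For a complex root `z`, `1 = Re q(z) ≤ q(|z|)` with equality
of the linear terms only if `z ≥ 0`, so `|z| ≤ x₁` forces `z = x₁`.
-/

open Polynomial Finset
open scoped ComplexOrder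

namespace Polynomial
variable {q : ℝ[X]}

theorem strictMonoOn_eval_of_coeff_nonneg (hq : ∀ n, 0 ≤ q.coeff n) (hq1 : 0 < q.coeff 1) :
    StrictMonoOn q.eval (Set.Ici 0) := by
  intro a (ha : 0 ≤ a) b _ hab
  show q.eval a < q.eval b
  have h1 : 1 ∈ range (q.natDegree + 1) :=
    mem_range.2 (Nat.lt_succ_of_le (le_natDegree_of_ne_zero hq1.ne'))
  rw [eval_eq_sum_range, eval_eq_sum_range]
  refine sum_lt_sum (fun i _ ↦ ?_) ⟨1, h1, ?_⟩
  · exact mul_le_mul_of_nonneg_left (pow_le_pow_left₀ ha hab.le i) (hq i)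
  · simpa using mul_lt_mul_of_pos_left hab hq1

theorem coeff_zero_le_eval_of_coeff_nonneg (hq : ∀ n, 0 ≤ q.coeff n) {x : ℝ} (hx : 0 ≤ x) :
    q.coeff 0 ≤ q.eval x := by
  rw [eval_eq_sum_range]
  simpa using single_le_sum (f := fun i ↦ q.coeff i * x ^ i)
    (fun i _ ↦ mul_nonneg (hq i) (pow_nonneg hx i)) (mem_range.2 q.natDegree.succ_pos)

theorem eval_derivative_pos_of_coeff_nonneg (hq : ∀ n, 0 ≤ q.coeff n) (hq1 : 0 < q.coeff 1)
    {x : ℝ} (hx : 0 ≤ x) : 0 < q.derivative.eval x := by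
  have hq' : ∀ n, 0 ≤ q.derivative.coeff n := fun n ↦ by
    rw [coeff_derivative]; exact mul_nonneg (hq _) (by positivity)
  refine lt_of_lt_of_le ?_ (coeff_zero_le_eval_of_coeff_nonneg hq' hx)
  simpa [coeff_derivative] using hq1

theorem re_aeval_lt_eval_norm_of_coeff_nonneg (hq : ∀ n, 0 ≤ q.coeff n) (hq1 : 0 < q.coeff 1)
    {z : ℂ} (hz : ¬ 0 ≤ z) : (aeval z q).re < q.eval ‖z‖ := by
  have h1 : 1 ∈ range (q.natDegree + 1) :=
    mem_range.2 (Nat.lt_succ_of_le (le_natDegree_of_ne_zero hq1.ne'))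
  have hre : z.re < ‖z‖ := (Complex.re_le_norm z).lt_of_ne (mt Complex.re_eq_norm.1 hz)
  rw [aeval_eq_sum_range, eval_eq_sum_range, Complex.re_sum]
  refine sum_lt_sum (fun i _ ↦ ?_) ⟨1, h1, ?_⟩
  · rw [Complex.smul_re, smul_eq_mul, ← norm_pow]
    exact mul_le_mul_of_nonneg_left (Complex.re_le_norm _) (hq i)
  · simpa using mul_lt_mul_of_pos_left hre hq1

theorem rootMultiplicity_one_sub_eq_one (hq : ∀ n, 0 ≤ q.coeff n) (hq1 : 0 < q.coeff 1)
    {x : ℝ} (hx : 0 ≤ x) (hqx : q.eval x = 1) : (1 - q).rootMultiplicity x = 1 := by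
  have hroot : (1 - q).IsRoot x := by simp [hqx]
  have hder : ¬ (derivative (1 - q)).IsRoot x := by
    simpa using (eval_derivative_pos_of_coeff_nonneg hq hq1 hx).ne'
  have hne : 1 - q ≠ 0 := fun h ↦ hder (by simp [h])
  have hpos := (rootMultiplicity_pos hne).2 hroot
  have hle := mt (one_lt_rootMultiplicity_iff_isRoot hne).1 (fun h ↦ hder h.2)
  omega

theorem lt_norm_of_aeval_one_sub_eq_zero (hq : ∀ n, 0 ≤ q.coeff n) (hq1 : 0 < q.coeff 1)
    {x : ℝ} (hx : 0 ≤ x) (hqx : q.eval x = 1) {z : ℂ} (hz : aeval z (1 - q) = 0)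
    (hzx : z ≠ x) : x < ‖z‖ := by
  have hqz : aeval z q = 1 := by rw [map_sub, map_one, sub_eq_zero] at hz; exact hz.symm
  have hmono := strictMonoOn_eval_of_coeff_nonneg hq hq1
  by_contra! hle
  by_cases h0 : 0 ≤ z
  · have hz_re : z = z.re := Complex.eq_re_of_ofReal_le (r := 0) (by simpa using h0)
    have hre0 : 0 ≤ z.re := (Complex.le_def.1 h0).1
    have hqre : q.eval z.re = 1 := by
      rw [hz_re] at hqz
      exact Complex.ofReal_eq_one.1 ((ofReal_eval (K := ℂ) q z.re).trans hqz)
    exact hzx (by rw [hz_re, hmono.injOn hre0 hx (hqre.trans hqx.symm)])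
  · have hlt : 1 < q.eval ‖z‖ := by
      simpa [hqz] using re_aeval_lt_eval_norm_of_coeff_nonneg hq hq1 h0
    linarith [hmono.monotoneOn (norm_nonneg z) hx hle]

end Polynomial

theorem sum_Icc_one_pow_add_pow {R : Type*} [CommSemiring R] (x : R) {ℓ : ℕ} (hℓ : 1 ≤ ℓ) :
    ∑ j ∈ Icc 1 (ℓ - 1), x ^ j + x ^ ℓ = x * ∑ i ∈ range ℓ, x ^ i := by
  obtain ⟨m, rfl⟩ := Nat.exists_eq_add_of_le' hℓ
  rw [Nat.add_sub_cancel]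
  clear hℓ
  induction m with
  | zero => simp
  | succ m ih =>
    rw [sum_Icc_succ_top (by omega), ih, sum_range_succ _ (m + 1)]
    ring

noncomputable def recursionSum (c η : ℝ) (ℓ : ℕ) : ℝ[X] :=
  C c * ((∑ j ∈ Icc 1 (ℓ - 1), X ^ j) + C η * X ^ ℓ)

variable {c η : ℝ} {ℓ : ℕ}

theorem coeff_recursionSum (n : ℕ) : (recursionSum c η ℓ).coeff n =
    c * ((if n ∈ Icc 1 (ℓ - 1) then 1 else 0) + if n = ℓ then η else 0) := by
  simp [recursionSum, finsetSum_coeff, coeff_X_pow]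

theorem coeff_recursionSum_nonneg (hc : 0 ≤ c) (hη : 0 ≤ η) (n : ℕ) :
    0 ≤ (recursionSum c η ℓ).coeff n := by
  rw [coeff_recursionSum]; positivity

theorem coeff_one_recursionSum_pos (hc : 0 < c) (hℓ : 1 ≤ ℓ) (hη : 0 < (ℓ : ℝ) - 1 + η) :
    0 < (recursionSum c η ℓ).coeff 1 := by
  rw [coeff_recursionSum]
  rcases hℓ.eq_or_lt with rfl | hℓ
  · simp_all
  · have : 1 ∈ Icc 1 (ℓ - 1) := mem_Icc.2 ⟨le_rfl, by omega⟩
    simp [this, hℓ.ne, hc]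

theorem coeff_zero_recursionSum (hℓ : 1 ≤ ℓ) : (recursionSum c η ℓ).coeff 0 = 0 := by
  rw [coeff_recursionSum, if_neg (by simp), if_neg (by omega)]
  ring

theorem eval_one_recursionSum (hℓ : 1 ≤ ℓ) :
    (recursionSum c η ℓ).eval 1 = c * (ℓ - 1 + η) := by
  simp [recursionSum, eval_finsetSum, Nat.cast_sub hℓ]

theorem eval_one_div_recursionSum_lt_one {D : ℝ} (hD : 1 < D) (hℓ : 1 ≤ ℓ) (hη : η ≤ 1) :
    (recursionSum (D - 1) η ℓ).eval (1 / D) < 1 := by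
  have hx : 0 < 1 / D := by positivity
  calc (recursionSum (D - 1) η ℓ).eval (1 / D)
      ≤ (D - 1) * (∑ j ∈ Icc 1 (ℓ - 1), (1 / D) ^ j + (1 / D) ^ ℓ) := by
        simp only [recursionSum, eval_mul, eval_C, eval_add, eval_finsetSum, eval_pow, eval_X]
        gcongr
        exact mul_le_of_le_one_left (by positivity) hη
    _ = 1 - (1 / D) ^ ℓ := by
        rw [sum_Icc_one_pow_add_pow _ hℓ, ← mul_assoc, ← mul_neg_geom_sum]
        field_simp
    _ < 1 := by linarith [pow_pos hx ℓ]

/-- Root analysis of the characteristic polynomial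
`p(x) = 1 - (D-1)(x + x² + ⋯ + x^{ℓ-1} + η x^{ℓ})` of the linear recursion
`R_k = (D-1)(Σ_{i=k-ℓ+1}^{k-1} R_i + η R_{k-ℓ})`:
`p` has exactly one root `x₁` in `(0,1)`, this root satisfies `x₁ > 1/D`, is a
simple root, and every other complex root has modulus strictly larger than `x₁`. -/
theorem decay_of_tails_jsq_stmt0
    (D ℓ : ℕ) (hD : 2 ≤ D) (hℓ : 1 ≤ ℓ) (η : ℝ) (hη : η ∈ Set.Icc (0:ℝ) 1)
    (hcond : ((D:ℝ) - 1) * ((ℓ:ℝ) - 1 + η) > 1)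
    (p : Polynomial ℝ)
    (hp : p = 1 - Polynomial.C ((D:ℝ) - 1) *
      ((∑ j ∈ Finset.Icc 1 (ℓ - 1), Polynomial.X ^ j) + Polynomial.C η * Polynomial.X ^ ℓ)) :
    ∃ x₁ ∈ Set.Ioo (0:ℝ) 1,
      p.eval x₁ = 0 ∧
      (∀ y ∈ Set.Ioo (0:ℝ) 1, p.eval y = 0 → y = x₁) ∧
      1 / (D:ℝ) < x₁ ∧
      Polynomial.rootMultiplicity x₁ p = 1 ∧
      ∀ z : ℂ, Polynomial.aeval z p = 0 → z ≠ (x₁ : ℂ) → (x₁ : ℝ) < ‖z‖ := by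
  obtain ⟨hη0, hη1⟩ := hη
  have hD1 : (1 : ℝ) < D := by exact_mod_cast hD
  set q := recursionSum ((D : ℝ) - 1) η ℓ
  replace hp : p = 1 - q := hp
  have hq : ∀ n, 0 ≤ q.coeff n := coeff_recursionSum_nonneg (by linarith) hη0
  have hq1 : 0 < q.coeff 1 := coeff_one_recursionSum_pos (by linarith) hℓ
    (pos_of_mul_pos_right (one_pos.trans hcond) (by linarith))
  have hmono := strictMonoOn_eval_of_coeff_nonneg hq hq1
  have hq_eval : ∀ y, p.eval y = 0 ↔ q.eval y = 1 := fun y ↦ by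
    rw [hp, eval_sub, eval_one, sub_eq_zero, eq_comm]
  obtain ⟨x₁, hx₁, hqx₁⟩ : ∃ x ∈ Set.Ioo (0 : ℝ) 1, q.eval x = 1 := by
    refine intermediate_value_Ioo zero_le_one q.continuous.continuousOn ⟨?_, ?_⟩
    · simp [← coeff_zero_eq_eval_zero, q, coeff_zero_recursionSum hℓ]
    · rw [eval_one_recursionSum hℓ]; linarith
  refine ⟨x₁, hx₁, (hq_eval x₁).2 hqx₁, fun y hy hpy ↦ ?_, ?_, ?_, fun z hz hzx ↦ ?_⟩
  · exact hmono.injOn hy.1.le hx₁.1.le (((hq_eval y).1 hpy).trans hqx₁.symm)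
  · rw [← hmono.lt_iff_lt (Set.mem_Ici.2 (by positivity)) hx₁.1.le, hqx₁]
    exact eval_one_div_recursionSum_lt_one hD1 hℓ hη1
  · exact hp ▸ rootMultiplicity_one_sub_eq_one hq hq1 hx₁.1.le hqx₁
  · exact lt_norm_of_aeval_one_sub_eq_zero hq hq1 hx₁.1.le hqx₁ (hp ▸ hz) hzx
end

section
/- Let D ≥ 2 and ℓ ≥ 1 be integers and let η ∈ [0,1] satisfy (D-1)(ℓ-1+η) > 1. Define R_k for integers k ≥ -ℓ+1 by R_k = 1 for -ℓ+1 ≤ k ≤ 0 and R_k = (D-1)(Σ_{i=k-ℓ+1}^{k-1} R_i + η R_{k-ℓ}) for k ≥ 1. Then lim_{k→∞} (1/k) log R_k / log D exists and equals a number q ∈ (0,1), where q is determined by the property that x = D^{-q} is the unique root in the interval (0,1) of the equation 1 = (D-1)(x + x² + ⋯ + x^{ℓ-1} + η x^{ℓ}); equivalently, x = D^{-q} satisfies Dx - 1 = (D-1)((1-η)x^{ℓ} + η x^{ℓ+1}). -/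
/-!
Put `x = D^{-q}` and `S_k = R_k x^k`. Since `x` solves the characteristic equation, the
recursion turns into `S_k = Σ_{j=1}^{ℓ} w_j S_{k-j}` with nonnegative weights `w_j` summing to `1`,
so every `S_k` stays in the convex hull `[1, x^{1-ℓ}]` of the initial values. Hence
`log R_k = k q log D + O(1)`. Finally `0 < q < 1` because `x < 1` and because the characteristic
function is monotone and already less than `1` at `1/D`.
-/

open Filter Topology Finset Real

theorem sum_Icc_sub_eq_sum_Icc_one {M : Type*} [AddCommMonoid M] (f : ℤ → M) (k : ℤ) (ℓ : ℕ) :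
    ∑ i ∈ Icc (k - ℓ + 1) (k - 1), f i = ∑ j ∈ Icc 1 (ℓ - 1), f (k - j) :=
  sum_nbij' (fun i => (k - i).toNat) (fun j => k - j)
    (fun i hi => by simp only [mem_Icc] at hi ⊢; omega)
    (fun j hj => by simp only [mem_Icc] at hj ⊢; omega)
    (fun i hi => by simp only [mem_Icc] at hi; omega)
    (fun j hj => by omega)
    (fun i hi => by simp only [mem_Icc] at hi; congr 1; omega)

theorem sum_Icc_one_eq_sum_add_last {M : Type*} [AddCommMonoid M] (f : ℕ → M) {ℓ : ℕ}
    (hℓ : 1 ≤ ℓ) : ∑ j ∈ Icc 1 ℓ, f j = ∑ j ∈ Icc 1 (ℓ - 1), f j + f ℓ := by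
  obtain ⟨m, rfl⟩ : ∃ m, ℓ = m + 1 := ⟨ℓ - 1, by omega⟩
  simpa using sum_Icc_succ_top hℓ f

theorem mem_of_convex_recurrence {𝕜 E : Type*} [Field 𝕜] [LinearOrder 𝕜] [IsStrictOrderedRing 𝕜]
    [AddCommGroup E] [Module 𝕜 E] {C : Set E} (hC : Convex 𝕜 C) {ℓ : ℕ} {w : ℕ → 𝕜}
    (hw0 : ∀ j ∈ Icc 1 ℓ, 0 ≤ w j) (hw1 : ∑ j ∈ Icc 1 ℓ, w j = 1) {S : ℤ → E}
    (hrec : ∀ k : ℤ, 1 ≤ k → S k = ∑ j ∈ Icc 1 ℓ, w j • S (k - j))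
    (hinit : ∀ k : ℤ, -(ℓ : ℤ) + 1 ≤ k → k ≤ 0 → S k ∈ C) {k : ℤ} (hk : -(ℓ : ℤ) + 1 ≤ k) :
    S k ∈ C := by
  suffices h : ∀ n : ℕ, ∀ k : ℤ, -(ℓ : ℤ) + 1 ≤ k → k ≤ n → S k ∈ C from h k.toNat k hk (by omega)
  intro n
  induction n with
  | zero => exact fun k hk1 hk2 => hinit k hk1 (by exact_mod_cast hk2)
  | succ n ih =>
    intro k hk1 hk2
    rcases le_or_gt k n with hkn | hkn
    · exact ih k hk1 hkn
    rw [hrec k (by omega)]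
    refine hC.sum_mem hw0 hw1 fun j hj => ih _ ?_ ?_ <;> simp only [mem_Icc] at hj <;> omega

section CharacteristicFunction

variable (c η : ℝ) (ℓ : ℕ)

def recurrenceChar (y : ℝ) : ℝ :=
  c * (∑ j ∈ Icc 1 (ℓ - 1), y ^ j + η * y ^ ℓ)

/-- The weight of `S_{k-j}` in the recursion for `S_k = R_k x^k`. -/
def recurrenceWeight (x : ℝ) (j : ℕ) : ℝ :=
  c * x ^ j * if j = ℓ then η else 1

variable {c η ℓ}

theorem recurrenceChar_monotoneOn (hc : 0 ≤ c) (hη : 0 ≤ η) :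
    MonotoneOn (recurrenceChar c η ℓ) (Set.Ici 0) := by
  intro y hy z hz hyz
  unfold recurrenceChar
  gcongr with j

theorem sub_one_mul_sum_Icc_inv_pow {D : ℝ} (hD : D ≠ 0) (m : ℕ) :
    (D - 1) * ∑ j ∈ Icc 1 m, D⁻¹ ^ j = 1 - D⁻¹ ^ m := by
  induction m with
  | zero => simp
  | succ m ih =>
    rw [sum_Icc_succ_top (by omega), mul_add, ih, pow_succ]
    field_simp
    ring

theorem recurrenceChar_inv_lt_one {D : ℝ} (hD : 1 < D) (hη : η ≤ 1) (hℓ : 1 ≤ ℓ) :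
    recurrenceChar (D - 1) η ℓ D⁻¹ < 1 := by
  have hpow : D⁻¹ ^ (ℓ - 1) = D * D⁻¹ ^ ℓ := by
    rw [← pow_sub_one_mul (by omega : ℓ ≠ 0)]
    field_simp
  have hpos : 0 < D⁻¹ ^ ℓ := by positivity
  unfold recurrenceChar
  rw [mul_add, sub_one_mul_sum_Icc_inv_pow (by positivity), hpow]
  nlinarith [mul_le_mul_of_nonneg_left hη (mul_nonneg (sub_nonneg.2 hD.le) hpos.le)]

theorem recurrenceWeight_nonneg (hc : 0 ≤ c) (hη : 0 ≤ η) {x : ℝ} (hx : 0 ≤ x) (j : ℕ) :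
    0 ≤ recurrenceWeight c η ℓ x j := by
  unfold recurrenceWeight
  split_ifs <;> positivity

theorem inv_lt_of_recurrenceChar_eq_one {D x : ℝ} (hD : 1 < D) (hη : η ∈ Set.Icc 0 1)
    (hℓ : 1 ≤ ℓ) (hx : 0 ≤ x) (hchar : recurrenceChar (D - 1) η ℓ x = 1) : D⁻¹ < x := by
  by_contra! h
  have := recurrenceChar_monotoneOn (ℓ := ℓ) (sub_nonneg.2 hD.le) hη.1 (Set.mem_Ici.2 hx)
    (Set.mem_Ici.2 (inv_nonneg.2 (by positivity))) h
  linarith [recurrenceChar_inv_lt_one hD hη.2 hℓ]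

theorem sum_recurrenceWeight (hℓ : 1 ≤ ℓ) (x : ℝ) :
    ∑ j ∈ Icc 1 ℓ, recurrenceWeight c η ℓ x j = recurrenceChar c η ℓ x := by
  rw [sum_Icc_one_eq_sum_add_last _ hℓ, recurrenceChar, mul_add, mul_sum]
  unfold recurrenceWeight
  rw [sum_congr rfl fun j hj => by rw [if_neg (by simp only [mem_Icc] at hj; omega)]]
  simp only [if_pos, mul_one]
  ring

theorem mul_zpow_eq_sum_recurrenceWeight {x : ℝ} (hx : x ≠ 0) (hℓ : 1 ≤ ℓ) {R : ℤ → ℝ} {k : ℤ}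
    (hk : R k = c * (∑ i ∈ Icc (k - ℓ + 1) (k - 1), R i + η * R (k - ℓ))) :
    R k * x ^ k = ∑ j ∈ Icc 1 ℓ, recurrenceWeight c η ℓ x j * (R (k - j) * x ^ (k - j)) := by
  have hshift (j : ℕ) : x ^ j * x ^ (k - j) = x ^ k := by
    rw [← zpow_natCast, ← zpow_add₀ hx, add_sub_cancel]
  rw [sum_Icc_one_eq_sum_add_last _ hℓ, hk, sum_Icc_sub_eq_sum_Icc_one, mul_add, mul_sum, add_mul,
    sum_mul]
  unfold recurrenceWeight
  congr 1
  · refine sum_congr rfl fun j hj => ?_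
    rw [if_neg (by simp only [mem_Icc] at hj; omega), ← hshift j]
    ring
  · rw [if_pos rfl, ← hshift ℓ]
    ring

end CharacteristicFunction

theorem tendsto_log_div_of_mul_pow_mem_Icc {u : ℕ → ℝ} {x a b : ℝ} (hx : 0 < x) (ha : 0 < a)
    (hu : ∀ k, u k * x ^ k ∈ Set.Icc a b) :
    Tendsto (fun k : ℕ => log (u k) / k) atTop (𝓝 (-log x)) := by
  have hlog (k : ℕ) : log (u k) = log (u k * x ^ k) - k * log x := by
    have hupos : 0 < u k := pos_of_mul_pos_left (ha.trans_le (hu k).1) (by positivity)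
    rw [log_mul hupos.ne' (by positivity), log_pow]
    ring
  have hbounded : Tendsto (fun k : ℕ => log (u k * x ^ k) / k) atTop (𝓝 0) := by
    refine tendsto_of_tendsto_of_tendsto_of_le_of_le (tendsto_const_div_atTop_nhds_zero_nat (log a))
      (tendsto_const_div_atTop_nhds_zero_nat (log b)) (fun k => ?_) (fun k => ?_) <;>
    dsimp only <;> gcongr
    exacts [(hu k).1, ha.trans_le (hu k).1, (hu k).2]
  have hev : (fun k : ℕ => log (u k * x ^ k) / k - log x) =ᶠ[atTop] fun k => log (u k) / k := by
    filter_upwards [eventually_ne_atTop 0] with k hk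
    rw [hlog, sub_div, mul_div_cancel_left₀ _ (Nat.cast_ne_zero.2 hk)]
  simpa using (hbounded.sub_const (log x)).congr' hev

theorem decay_of_tails_jsq_stmt1_general
    (D ℓ : ℕ) (hD : 2 ≤ D) (hℓ : 1 ≤ ℓ) (η : ℝ) (hη : η ∈ Set.Icc (0:ℝ) 1)
    (R : ℤ → ℝ)
    (hinit : ∀ k : ℤ, -(ℓ:ℤ) + 1 ≤ k → k ≤ 0 → R k = 1)
    (hrec : ∀ k : ℤ, 1 ≤ k →
      R k = ((D:ℝ) - 1) * ((∑ i ∈ Finset.Icc (k - (ℓ:ℤ) + 1) (k - 1), R i) + η * R (k - ℓ)))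
    (q : ℝ)
    (hx : (D:ℝ) ^ (-q) ∈ Set.Ioo (0:ℝ) 1)
    (heq : 1 = ((D:ℝ) - 1) *
      ((∑ j ∈ Finset.Icc 1 (ℓ - 1), ((D:ℝ) ^ (-q)) ^ j) + η * ((D:ℝ) ^ (-q)) ^ ℓ)) :
    q ∈ Set.Ioo (0:ℝ) 1 ∧
    Filter.Tendsto (fun k : ℕ => (1 / (k:ℝ)) * (Real.log (R k) / Real.log D))
      Filter.atTop (𝓝 q) := by
  set x := (D:ℝ) ^ (-q)
  obtain ⟨hx0, hx1⟩ := hx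
  have hD1 : (1:ℝ) < D := by exact_mod_cast hD
  have hlogD : 0 < log D := log_pos hD1
  have hlogx : log x = -q * log D := log_rpow (by positivity) _
  have hxD : (D:ℝ)⁻¹ < x := inv_lt_of_recurrenceChar_eq_one hD1 hη hℓ hx0.le heq.symm
  have hq : q ∈ Set.Ioo 0 1 := by
    refine ⟨?_, ?_⟩
    · nlinarith [log_neg hx0 hx1]
    · rw [← rpow_neg_one] at hxD
      linarith [(rpow_lt_rpow_left_iff hD1).1 hxD]
  have hbounds (k : ℤ) (hk : -(ℓ:ℤ) + 1 ≤ k) : R k * x ^ k ∈ Set.Icc 1 (x ^ (1 - ℓ : ℤ)) := by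
    refine mem_of_convex_recurrence (convex_Icc _ _)
      (fun j _ => recurrenceWeight_nonneg (sub_nonneg.2 hD1.le) hη.1 hx0.le j)
      ((sum_recurrenceWeight hℓ x).trans heq.symm)
      (fun k hk => mul_zpow_eq_sum_recurrenceWeight hx0.ne' hℓ (hrec k hk))
      (fun k hk1 hk0 => ?_) hk
    rw [hinit k hk1 hk0, one_mul]
    exact ⟨one_le_zpow_of_nonpos₀ hx0 hx1.le hk0,
      zpow_le_zpow_right_of_le_one₀ hx0 hx1.le (by omega)⟩
  refine ⟨hq, ?_⟩
  have hlim := (tendsto_log_div_of_mul_pow_mem_Icc hx0 one_pos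
    fun k : ℕ => by simpa using hbounds k (by omega)).div_const (log D)
  rw [hlogx, neg_mul, neg_neg, mul_div_cancel_right₀ _ hlogD.ne'] at hlim
  refine hlim.congr fun k => ?_
  ring

/-- For the linear recursion `R_k = (D-1)(Σ_{i=k-ℓ+1}^{k-1} R_i + η R_{k-ℓ})` with
initial values `R_k = 1` for `-ℓ+1 ≤ k ≤ 0`, under the condition `(D-1)(ℓ-1+η) > 1`,
the limit `lim_{k→∞} (1/k) log_D R_k` exists and equals the number `q ∈ (0,1)`
determined by the fact that `x = D^{-q}` is the unique root in `(0,1)` of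
`1 = (D-1)(x + x² + ⋯ + x^{ℓ-1} + η x^{ℓ})`. -/
theorem decay_of_tails_jsq_stmt1
    (D ℓ : ℕ) (hD : 2 ≤ D) (hℓ : 1 ≤ ℓ) (η : ℝ) (hη : η ∈ Set.Icc (0:ℝ) 1)
    (hcond : ((D:ℝ) - 1) * ((ℓ:ℝ) - 1 + η) > 1)
    (R : ℤ → ℝ)
    (hinit : ∀ k : ℤ, -(ℓ:ℤ) + 1 ≤ k → k ≤ 0 → R k = 1)
    (hrec : ∀ k : ℤ, 1 ≤ k →
      R k = ((D:ℝ) - 1) * ((∑ i ∈ Finset.Icc (k - (ℓ:ℤ) + 1) (k - 1), R i) + η * R (k - ℓ)))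
    (q : ℝ)
    (hx : (D:ℝ) ^ (-q) ∈ Set.Ioo (0:ℝ) 1)
    (heq : 1 = ((D:ℝ) - 1) *
      ((∑ j ∈ Finset.Icc 1 (ℓ - 1), ((D:ℝ) ^ (-q)) ^ j) + η * ((D:ℝ) ^ (-q)) ^ ℓ)) :
    q ∈ Set.Ioo (0:ℝ) 1 ∧
    Filter.Tendsto (fun k : ℕ => (1 / (k:ℝ)) * (Real.log (R k) / Real.log D))
      Filter.atTop (𝓝 q) :=
  decay_of_tails_jsq_stmt1_general D ℓ hD hℓ η hη R hinit hrec q hx heq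
end

section
/- Fix an integer D ≥ 2. For each real β with (D-1)β > 1, set ℓ(β) = ⌊β⌋ + 1 and η(β) = β - ⌊β⌋, let x(β) denote the unique root in (0,1) of the equation 1 = (D-1)(x + x² + ⋯ + x^{ℓ(β)-1} + η(β) x^{ℓ(β)}), and define q_D(β) = -log x(β)/log D. Then the function β ↦ q_D(β) is well defined and continuous on the set {β ∈ ℝ : (D-1)β > 1}, and takes values in (0,1). -/
/-!
The left side `(D - 1) f(β, x)` of the equation is strictly increasing in `x ≥ 0`, from `0` at
`x = 0` to `(D - 1) β > 1` at `x = 1`, so the equation has exactly one root `x(β)` in `(0, 1)`; it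
exceeds `1/D` because `(D - 1) f(β, 1/D) ≤ (D - 1) ∑_{j ≤ ⌊β⌋ + 1} D⁻ʲ < 1`. As a function of `β`,
`f(β, x)` is the piecewise-linear interpolation of the partial geometric sums, hence continuous,
and the root of a strictly monotone equation depending continuously on a parameter is continuous
in the parameter. Finally `q_D(β) = -log_D x(β)`.
-/

open Set Filter Topology

section Interpolation

variable {E : Type*} [AddCommGroup E] [Module ℝ E]

/-- Piecewise linear through the points `(n, s n)`; affine on `(-∞, 1]`, where `⌊t⌋₊ = 0`. -/
noncomputable def interpolateSeq (s : ℕ → E) (t : ℝ) : E :=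
  s ⌊t⌋₊ + (t - ⌊t⌋₊) • (s (⌊t⌋₊ + 1) - s ⌊t⌋₊)

theorem interpolateSeq_of_lt_one (s : ℕ → E) {t : ℝ} (ht : t < 1) :
    interpolateSeq s t = s 0 + t • (s 1 - s 0) := by
  simp [interpolateSeq, Nat.floor_eq_zero.2 ht]

theorem interpolateSeq_of_mem_Icc (s : ℕ → E) {n : ℕ} {t : ℝ} (ht : t ∈ Icc (n : ℝ) (n + 1)) :
    interpolateSeq s t = s n + (t - n) • (s (n + 1) - s n) := by
  rcases ht.2.lt_or_eq with hlt | rfl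
  · rw [interpolateSeq, (Nat.floor_eq_iff (n.cast_nonneg.trans ht.1)).2 ⟨ht.1, hlt⟩]
  · have : ⌊(n : ℝ) + 1⌋₊ = n + 1 := by exact_mod_cast Nat.floor_natCast (n + 1)
    simp [interpolateSeq, this]

variable [TopologicalSpace E] [IsTopologicalAddGroup E] [ContinuousSMul ℝ E]

theorem continuousOn_interpolateSeq_Icc (s : ℕ → E) (n : ℕ) :
    ContinuousOn (interpolateSeq s) (Icc (n : ℝ) (n + 1)) :=
  (by fun_prop : Continuous fun t : ℝ => s n + (t - n) • (s (n + 1) - s n)).continuousOn.congr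
    fun _ ht => interpolateSeq_of_mem_Icc s ht

theorem continuous_interpolateSeq (s : ℕ → E) : Continuous (interpolateSeq s) := by
  refine continuous_iff_continuousAt.2 fun t₀ => ?_
  rcases le_or_gt t₀ 0 with ht₀ | ht₀
  · have : interpolateSeq s =ᶠ[𝓝 t₀] fun t => s 0 + t • (s 1 - s 0) :=
      eventually_of_mem (Iio_mem_nhds (by linarith)) fun _ ht => interpolateSeq_of_lt_one s ht
    exact ContinuousAt.congr (by fun_prop) this.symm
  refine continuousAt_iff_continuous_left_right.2 ⟨?_, ?_⟩
  · obtain ⟨m, hm⟩ := Nat.exists_eq_add_one.2 (Nat.ceil_pos.2 ht₀)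
    have hmem : t₀ ∈ Ioc (m : ℝ) (m + 1) := by
      have h1 := Nat.ceil_lt_add_one ht₀.le
      have h2 := Nat.le_ceil t₀
      rw [hm] at h1 h2
      push_cast at h1 h2
      constructor <;> linarith
    exact ((continuousOn_interpolateSeq_Icc s m) t₀ (Ioc_subset_Icc_self hmem))
      |>.mono_of_mem_nhdsWithin (Icc_mem_nhdsLE_of_mem hmem)
  · have hmem : t₀ ∈ Ico (⌊t₀⌋₊ : ℝ) (⌊t₀⌋₊ + 1) :=
      ⟨Nat.floor_le ht₀.le, Nat.lt_floor_add_one t₀⟩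
    exact ((continuousOn_interpolateSeq_Icc s _) t₀ (Ico_subset_Icc_self hmem))
      |>.mono_of_mem_nhdsWithin (Icc_mem_nhdsGE_of_mem hmem)

end Interpolation

theorem continuousAt_of_strictMonoOn_of_apply_eq_zero {X : Type*} [TopologicalSpace X]
    {F : X → ℝ → ℝ} {r : X → ℝ} {t₀ : X} {a : ℝ} (hF : ∀ x, ContinuousAt (F · x) t₀)
    (hmono : ∀ᶠ t in 𝓝 t₀, StrictMonoOn (F t) (Ici a))
    (hr : ∀ᶠ t in 𝓝 t₀, a ≤ r t ∧ F t (r t) = 0) : ContinuousAt r t₀ := by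
  obtain ⟨hr₀a, hr₀⟩ := hr.self_of_nhds
  refine tendsto_order.2 ⟨fun u hu => ?_, fun v hv => ?_⟩
  · rcases lt_or_ge u a with hua | hau
    · exact hr.mono fun t ht => hua.trans_le ht.1
    have hFu : F t₀ u < 0 := hr₀ ▸ hmono.self_of_nhds hau hr₀a hu
    filter_upwards [hmono, hr, (hF u).eventually_lt_const hFu] with t hmt ⟨hrt, hroot⟩ hFt
    exact (hmt.lt_iff_lt hau hrt).1 (hroot ▸ hFt)
  · have hav : a ≤ v := hr₀a.trans hv.le
    have hFv : 0 < F t₀ v := hr₀ ▸ hmono.self_of_nhds hr₀a hav hv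
    filter_upwards [hmono, hr, (hF v).eventually_const_lt hFv] with t hmt ⟨hrt, hroot⟩ hFt
    exact (hmt.lt_iff_lt hrt hav).1 (hroot ▸ hFt)

/-- The geometric sum `x + x² + ⋯ + x^β` with a real number `β ≥ 0` of terms, interpolating
linearly in `β` between the partial sums. -/
noncomputable def fracGeomSum (β x : ℝ) : ℝ :=
  (∑ j ∈ Finset.Icc 1 ⌊β⌋₊, x ^ j) + (β - ⌊β⌋₊) * x ^ (⌊β⌋₊ + 1)

theorem fracGeomSum_eq_interpolateSeq (β x : ℝ) :
    fracGeomSum β x = interpolateSeq (fun n => ∑ j ∈ Finset.Icc 1 n, x ^ j) β := by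
  simp [fracGeomSum, interpolateSeq, Finset.sum_Icc_succ_top]

theorem continuous_fracGeomSum_left (x : ℝ) : Continuous fun β => fracGeomSum β x := by
  simpa only [fracGeomSum_eq_interpolateSeq] using continuous_interpolateSeq _

theorem continuous_fracGeomSum_right (β : ℝ) : Continuous (fracGeomSum β) := by
  unfold fracGeomSum; fun_prop

theorem fracGeomSum_zero_right (β : ℝ) : fracGeomSum β 0 = 0 := by
  simp [fracGeomSum, zero_pow_eq]

theorem fracGeomSum_one_right (β : ℝ) : fracGeomSum β 1 = β := by
  simp [fracGeomSum]

theorem strictMonoOn_fracGeomSum {β : ℝ} (hβ : 0 < β) : StrictMonoOn (fracGeomSum β) (Ici 0) := by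
  intro x (hx : 0 ≤ x) y _ hxy
  have hη : 0 ≤ β - ⌊β⌋₊ := sub_nonneg.2 (Nat.floor_le hβ.le)
  rcases Nat.eq_zero_or_pos ⌊β⌋₊ with h0 | hpos
  · simpa [fracGeomSum, h0] using mul_lt_mul_of_pos_left hxy hβ
  · have hsum : ∑ j ∈ Finset.Icc 1 ⌊β⌋₊, x ^ j < ∑ j ∈ Finset.Icc 1 ⌊β⌋₊, y ^ j :=
      Finset.sum_lt_sum (fun j _ => by gcongr) ⟨1, Finset.mem_Icc.2 ⟨le_rfl, hpos⟩, by simpa⟩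
    exact add_lt_add_of_lt_of_le hsum (by gcongr)

theorem fracGeomSum_le_geom_sum {β x : ℝ} (hx : 0 ≤ x) :
    fracGeomSum β x ≤ ∑ j ∈ Finset.Icc 1 (⌊β⌋₊ + 1), x ^ j := by
  have hη : β - ⌊β⌋₊ ≤ 1 := by linarith [Nat.lt_floor_add_one β]
  rw [Finset.sum_Icc_succ_top (by omega), fracGeomSum]
  gcongr
  exact mul_le_of_le_one_left (by positivity) hη

theorem sub_one_mul_fracGeomSum_inv_lt_one (β : ℝ) {D : ℝ} (hD : 1 < D) :
    (D - 1) * fracGeomSum β D⁻¹ < 1 := by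
  set m := ⌊β⌋₊ + 1
  have hDinv : D * D⁻¹ = 1 := mul_inv_cancel₀ (by positivity)
  have hgeom : (∑ j ∈ Finset.Icc 1 m, D⁻¹ ^ j) * (D⁻¹ - 1) = D⁻¹ ^ (m + 1) - D⁻¹ := by
    rw [← Finset.Ico_add_one_right_eq_Icc, geom_sum_Ico_mul _ (by omega), pow_one]
  have hsum : (D - 1) * ∑ j ∈ Finset.Icc 1 m, D⁻¹ ^ j = 1 - D * D⁻¹ ^ (m + 1) := by
    linear_combination (-D) * hgeom + (∑ j ∈ Finset.Icc 1 m, D⁻¹ ^ j + 1) * hDinv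
  calc (D - 1) * fracGeomSum β D⁻¹
      ≤ (D - 1) * ∑ j ∈ Finset.Icc 1 m, D⁻¹ ^ j := by
        have : 0 ≤ D - 1 := by linarith
        gcongr
        exact fracGeomSum_le_geom_sum (by positivity)
    _ < 1 := by
        have : 0 < D := by linarith
        rw [hsum]
        linarith [show 0 < D * D⁻¹ ^ (m + 1) by positivity]

section Root

variable {D β : ℝ}

theorem strictMonoOn_sub_one_mul_fracGeomSum (hD : 1 < D) (hβ : 1 < (D - 1) * β) :
    StrictMonoOn (fun x => (D - 1) * fracGeomSum β x) (Ici 0) :=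
  fun _ hx _ hy hxy => mul_lt_mul_of_pos_left
    (strictMonoOn_fracGeomSum (pos_of_mul_pos_right (one_pos.trans hβ) (by linarith)) hx hy hxy)
    (by linarith)

theorem existsUnique_fracGeomSum_eq_one (hD : 1 < D) (hβ : 1 < (D - 1) * β) :
    ∃! x, x ∈ Ioo 0 1 ∧ (D - 1) * fracGeomSum β x = 1 := by
  have hmono := strictMonoOn_sub_one_mul_fracGeomSum hD hβ
  obtain ⟨x, hx, hroot⟩ : ∃ x ∈ Ioo 0 1, (D - 1) * fracGeomSum β x = 1 := by
    refine intermediate_value_Ioo zero_le_one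
      ((continuous_fracGeomSum_right β).const_mul _).continuousOn ?_
    simpa [fracGeomSum_zero_right, fracGeomSum_one_right] using hβ
  refine ⟨x, ⟨hx, hroot⟩, fun y ⟨hy, hyroot⟩ => ?_⟩
  exact hmono.injOn hy.1.le hx.1.le (hyroot.trans hroot.symm)

/-- The root `x(β)`; a junk value when `(D - 1) β ≤ 1`. -/
noncomputable def fracGeomRoot (D β : ℝ) : ℝ :=
  Classical.epsilon fun x => x ∈ Ioo 0 1 ∧ (D - 1) * fracGeomSum β x = 1

theorem fracGeomRoot_spec (hD : 1 < D) (hβ : 1 < (D - 1) * β) :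
    fracGeomRoot D β ∈ Ioo 0 1 ∧ (D - 1) * fracGeomSum β (fracGeomRoot D β) = 1 :=
  Classical.epsilon_spec (existsUnique_fracGeomSum_eq_one hD hβ).exists

theorem inv_lt_fracGeomRoot (hD : 1 < D) (hβ : 1 < (D - 1) * β) : D⁻¹ < fracGeomRoot D β := by
  obtain ⟨hx, hroot⟩ := fracGeomRoot_spec hD hβ
  have hD₀ : 0 < D := by linarith
  exact ((strictMonoOn_sub_one_mul_fracGeomSum hD hβ).lt_iff_lt (inv_pos.2 hD₀).le hx.1.le).1
    ((sub_one_mul_fracGeomSum_inv_lt_one β hD).trans_eq hroot.symm)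

theorem continuousOn_fracGeomRoot (hD : 1 < D) :
    ContinuousOn (fracGeomRoot D) {β | 1 < (D - 1) * β} := by
  have hopen : IsOpen {β : ℝ | 1 < (D - 1) * β} := isOpen_lt continuous_const (by fun_prop)
  refine fun β₀ hβ₀ => ContinuousAt.continuousWithinAt ?_
  have hnear : ∀ᶠ β in 𝓝 β₀, 1 < (D - 1) * β := hopen.mem_nhds hβ₀
  refine continuousAt_of_strictMonoOn_of_apply_eq_zero
    (F := fun β x => (D - 1) * fracGeomSum β x - 1) (a := 0) (fun x => ?_) ?_ ?_
  · exact (((continuous_fracGeomSum_left x).const_mul _).sub continuous_const).continuousAt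
  · filter_upwards [hnear] with β hβ x hx y hy hxy
    exact sub_lt_sub_right (strictMonoOn_sub_one_mul_fracGeomSum hD hβ hx hy hxy) 1
  · filter_upwards [hnear] with β hβ
    obtain ⟨hx, hroot⟩ := fracGeomRoot_spec hD hβ
    exact ⟨hx.1.le, sub_eq_zero.2 hroot⟩

end Root

/-- For each real `β` with `(D-1)β > 1`, with `ℓ(β) = ⌊β⌋+1` and `η(β) = β - ⌊β⌋`,
the equation `1 = (D-1)(x + ⋯ + x^{ℓ(β)-1} + η(β) x^{ℓ(β)})` has a unique root
`x(β)` in `(0,1)`, and the function `q_D(β) = -log x(β)/log D` is well defined,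
continuous on `{β : (D-1)β > 1}`, and takes values in `(0,1)`. -/
theorem decay_of_tails_jsq_stmt2 (D : ℕ) (hD : 2 ≤ D) :
    (∀ β : ℝ, ((D:ℝ) - 1) * β > 1 →
      ∃! x : ℝ, x ∈ Set.Ioo (0:ℝ) 1 ∧
        1 = ((D:ℝ) - 1) *
          ((∑ j ∈ Finset.Icc 1 ⌊β⌋₊, x ^ j) + (β - (⌊β⌋₊ : ℝ)) * x ^ (⌊β⌋₊ + 1))) ∧
    ∃ q : ℝ → ℝ,
      ContinuousOn q {β : ℝ | ((D:ℝ) - 1) * β > 1} ∧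
      ∀ β : ℝ, ((D:ℝ) - 1) * β > 1 →
        q β ∈ Set.Ioo (0:ℝ) 1 ∧
        (D:ℝ) ^ (-(q β)) ∈ Set.Ioo (0:ℝ) 1 ∧
        1 = ((D:ℝ) - 1) *
          ((∑ j ∈ Finset.Icc 1 ⌊β⌋₊, ((D:ℝ) ^ (-(q β))) ^ j)
            + (β - (⌊β⌋₊ : ℝ)) * ((D:ℝ) ^ (-(q β))) ^ (⌊β⌋₊ + 1)) := by
  have hD' : (1 : ℝ) < D := by exact_mod_cast hD
  refine ⟨fun β hβ => ?_, fun β => -Real.logb D (fracGeomRoot D β), ?_, fun β hβ => ?_⟩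
  · simpa only [fracGeomSum, eq_comm] using existsUnique_fracGeomSum_eq_one hD' hβ
  · exact ((continuousOn_fracGeomRoot hD').logb fun β hβ =>
      (fracGeomRoot_spec hD' hβ).1.1.ne').neg
  obtain ⟨⟨hx₀, hx₁⟩, hroot⟩ := fracGeomRoot_spec hD' hβ
  rw [neg_neg, Real.rpow_logb (by positivity) hD'.ne' hx₀]
  refine ⟨⟨neg_pos.2 (Real.logb_neg hD' hx₀ hx₁), ?_⟩, ⟨hx₀, hx₁⟩, hroot.symm⟩
  have := Real.logb_lt_logb hD' (by positivity) (inv_lt_fracGeomRoot hD' hβ)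
  rw [Real.logb_inv, Real.logb_self_eq_one hD'] at this
  linarith
end

section
/- Let D ≥ 2 be an integer and β > D/(D-1) a real number; set ℓ = ⌊β⌋ and β̂ = β - ⌊β⌋, and let q_D(β) = -log x(β)/log D, where x(β) is the unique root in (0,1) of 1 = (D-1)(x + x² + ⋯ + x^{ℓ-1} + β̂ x^{ℓ}) (this root exists since (D-1)(β-1) > 1). Suppose P : ℕ → (0,1] satisfies P_0 = 1 and that there exists a constant C₁ > 0 such that P_k ≥ C₁ 3^{-k} (∏_{i=k-ℓ+1}^{k-1} P_i^{D-1}) · P_{k-ℓ}^{β̂(D-1)} for all k ≥ ℓ. Then limsup_{k→∞} (1/k) · log(log(1/P_k))/log D ≤ q_D(β). -/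
/-!
With `R k = log (1 / P k)`, the hypothesis becomes the linear recursion inequality
`R k ≤ c + k log 3 + ∑_{j=1}^{ℓ} w j R (k - j)` with nonnegative weights `w` whose characteristic
equation `∑ w j x^j = 1` has the root `x = D^(-q)`. For every `λ > 1 / x` we have
`∑ w j λ^(-j) < 1`, so for large `M` the sequence `M λ^k` dominates the initial values and
the affine forcing term, and strong induction gives `R k ≤ M λ^k`. Taking `λ = D^(q + ε/2)`,
`log (R k) / k ≤ (q + ε) log D` for large `k`.
-/

open Filter Finset Real

theorem exists_add_mul_le_mul_pow (c a : ℝ) {lam : ℝ} (hlam : 1 < lam) :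
    ∃ M, ∀ k : ℕ, c + a * k ≤ M * lam ^ k := by
  refine ⟨|c| + |a| / (lam - 1), fun k => ?_⟩
  have hlam1 : 0 < lam - 1 := by linarith
  have hbernoulli : 1 + k * (lam - 1) ≤ lam ^ k := by
    simpa using one_add_mul_le_pow (a := lam - 1) (by linarith) k
  have ha : |a| = |a| / (lam - 1) * (lam - 1) := by field_simp
  have hk : (0:ℝ) ≤ k := k.cast_nonneg
  calc c + a * k ≤ |c| + |a| / (lam - 1) * (lam - 1) * k := by
        rw [← ha]; gcongr
        · exact le_abs_self c
        · exact le_abs_self a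
    _ ≤ (|c| + |a| / (lam - 1)) * (1 + k * (lam - 1)) := by
        nlinarith [mul_nonneg (mul_nonneg (abs_nonneg c) hk) hlam1.le,
          div_nonneg (abs_nonneg a) hlam1.le]
    _ ≤ (|c| + |a| / (lam - 1)) * lam ^ k := by gcongr

section LinearRecursion

variable {R w : ℕ → ℝ} {L : ℕ} {c a lam : ℝ}

theorem le_mul_pow_of_le_linear_recursion {M : ℝ} (hw : ∀ j, 0 ≤ w j) (hlam : 0 < lam)
    (hrec : ∀ k, L ≤ k → R k ≤ c + a * k + ∑ j ∈ Icc 1 L, w j * R (k - j))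
    (hinit : ∀ k < L, R k ≤ M * lam ^ k)
    (hforce : ∀ k : ℕ, c + a * k ≤ (1 - ∑ j ∈ Icc 1 L, w j / lam ^ j) * M * lam ^ k) :
    ∀ k, R k ≤ M * lam ^ k := by
  intro k
  induction k using Nat.strong_induction_on with
  | _ k ih =>
    rcases lt_or_ge k L with hk | hk
    · exact hinit k hk
    have hterm : ∀ j ∈ Icc 1 L, w j * R (k - j) ≤ M * lam ^ k * (w j / lam ^ j) := by
      intro j hj
      obtain ⟨hj1, hjL⟩ := mem_Icc.1 hj
      calc w j * R (k - j) ≤ w j * (M * lam ^ (k - j)) :=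
            mul_le_mul_of_nonneg_left (ih _ (by omega)) (hw j)
        _ = M * lam ^ k * (w j / lam ^ j) := by
            rw [pow_sub₀ _ hlam.ne' (by omega)]; ring
    calc R k ≤ c + a * k + ∑ j ∈ Icc 1 L, w j * R (k - j) := hrec k hk
      _ ≤ (1 - ∑ j ∈ Icc 1 L, w j / lam ^ j) * M * lam ^ k
          + M * lam ^ k * ∑ j ∈ Icc 1 L, w j / lam ^ j := by
        rw [mul_sum]; exact add_le_add (hforce k) (sum_le_sum hterm)
      _ = M * lam ^ k := by ring

theorem exists_le_mul_pow_of_le_linear_recursion (hw : ∀ j, 0 ≤ w j) (hlam : 1 < lam)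
    (hs : ∑ j ∈ Icc 1 L, w j / lam ^ j < 1)
    (hrec : ∀ k, L ≤ k → R k ≤ c + a * k + ∑ j ∈ Icc 1 L, w j * R (k - j)) :
    ∃ M, ∀ k, R k ≤ M * lam ^ k := by
  set s := ∑ j ∈ Icc 1 L, w j / lam ^ j
  have hs1 : 0 < 1 - s := by linarith
  have hpow : ∀ k : ℕ, 0 < lam ^ k := fun k => pow_pos (by linarith) k
  obtain ⟨M₁, hM₁⟩ := exists_add_mul_le_mul_pow (c / (1 - s)) (a / (1 - s)) hlam
  obtain ⟨M₂, hM₂⟩ := ((Set.finite_Iio L).image fun k => R k / lam ^ k).bddAbove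
  refine ⟨max M₁ M₂, le_mul_pow_of_le_linear_recursion hw (by linarith) hrec ?_ ?_⟩
  · intro k hk
    have := hM₂ ⟨k, hk, rfl⟩
    rw [div_le_iff₀ (hpow k)] at this
    nlinarith [le_max_right M₁ M₂, hpow k]
  · intro k
    calc c + a * k = (1 - s) * (c / (1 - s) + a / (1 - s) * k) := by field_simp
      _ ≤ (1 - s) * (M₁ * lam ^ k) := by gcongr; exact hM₁ k
      _ ≤ (1 - s) * max M₁ M₂ * lam ^ k := by
        rw [mul_assoc]; gcongr; exact le_max_left _ _

end LinearRecursion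

theorem sum_div_pow_lt_one {w : ℕ → ℝ} {L : ℕ} {x lam : ℝ} (hw : ∀ j, 0 ≤ w j) (hx : 0 < x)
    (hwx : ∑ j ∈ Icc 1 L, w j * x ^ j ≤ 1) (hxlam : 1 < x * lam) :
    ∑ j ∈ Icc 1 L, w j / lam ^ j < 1 := by
  set r := (x * lam)⁻¹ with hr
  have hr0 : 0 < r := inv_pos.2 (by linarith)
  have hr1 : r < 1 := inv_lt_one_of_one_lt₀ hxlam
  have hlam_inv : lam⁻¹ = x * r := by
    rw [hr, mul_inv, ← mul_assoc, mul_inv_cancel₀ hx.ne', one_mul]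
  calc ∑ j ∈ Icc 1 L, w j / lam ^ j ≤ ∑ j ∈ Icc 1 L, w j * x ^ j * r := by
        refine sum_le_sum fun j hj => ?_
        rw [div_eq_mul_inv, ← inv_pow, hlam_inv, mul_pow, ← mul_assoc]
        have hj1 := (mem_Icc.1 hj).1
        exact mul_le_mul_of_nonneg_left (pow_le_of_le_one hr0.le hr1.le (by omega))
          (mul_nonneg (hw j) (pow_nonneg hx.le j))
    _ ≤ r := by rw [← sum_mul]; exact mul_le_of_le_one_left hr0.le hwx
    _ < 1 := hr1

theorem sum_Icc_ite_lt_mul {L : ℕ} (hL : 1 ≤ L) (u v : ℝ) (y : ℕ → ℝ) :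
    ∑ j ∈ Icc 1 L, (if j < L then u else v) * y j = u * ∑ j ∈ Icc 1 (L - 1), y j + v * y L := by
  obtain ⟨n, rfl⟩ : ∃ n, L = n + 1 := ⟨L - 1, by omega⟩
  rw [sum_Icc_succ_top (by omega), Nat.add_sub_cancel, mul_sum, if_neg (lt_irrefl _)]
  congr 1
  exact sum_congr rfl fun j hj => by rw [if_pos (by have := (mem_Icc.1 hj).2; omega)]

theorem neg_log_le_of_mul_prod_le {P : ℕ → ℝ} (hP : ∀ n, 0 < P n) {C b t s : ℝ} (hC : 0 < C)
    (hb : 0 < b) {m : ℕ} {I : Finset ℕ} {i k : ℕ}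
    (h : C * b ^ (-t) * (∏ n ∈ I, P n ^ m) * P i ^ s ≤ P k) :
    -log (P k) ≤ -log C + t * log b + m * ∑ n ∈ I, -log (P n) + s * -log (P i) := by
  have hprod : 0 < ∏ n ∈ I, P n ^ m := prod_pos fun n _ => pow_pos (hP n) m
  have hlog := log_le_log (by have := hP i; positivity) h
  rw [log_mul (by positivity) (rpow_pos_of_pos (hP i) s).ne', log_mul (by positivity) hprod.ne',
    log_mul hC.ne' (rpow_pos_of_pos hb _).ne', log_rpow hb, log_rpow (hP i),
    log_prod fun n _ => (pow_pos (hP n) m).ne'] at hlog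
  simp only [log_pow, ← mul_sum, sum_neg_distrib] at hlog ⊢
  linarith

theorem neg_log_le_linear_recursion {P : ℕ → ℝ} (hP : ∀ n, 0 < P n) {C s : ℝ} (hC : 0 < C)
    {L m : ℕ} (hL : 1 ≤ L)
    (hrec : ∀ k : ℕ, L ≤ k →
      C * (3:ℝ) ^ (-(k:ℝ)) * (∏ i ∈ Ico (k - L + 1) k, P i ^ m) * P (k - L) ^ s ≤ P k)
    (k : ℕ) (hk : L ≤ k) :
    -log (P k) ≤ -log C + log 3 * k
      + ∑ j ∈ Icc 1 L, (if j < L then (m:ℝ) else s) * -log (P (k - j)) := by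
  have := neg_log_le_of_mul_prod_le hP hC (by norm_num) (hrec k hk)
  rw [sum_Icc_ite_lt_mul hL, ← Ico_add_one_right_eq_Icc,
    sum_Ico_reflect (fun n => -log (P n)) _ (by omega), Nat.add_sub_cancel,
    show k + 1 - (L - 1 + 1) = k - L + 1 by omega]
  linarith

theorem eventually_inv_mul_log_le {R : ℕ → ℝ} {M lam δ : ℝ} (hR : ∀ k, 0 ≤ R k)
    (hRM : ∀ k, R k ≤ M * lam ^ k) (hlam : 1 ≤ lam) (hδ : 0 < δ) :
    ∀ᶠ k : ℕ in atTop, (1 / (k:ℝ)) * log (R k) ≤ log lam + δ := by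
  obtain ⟨N, hN⟩ := exists_nat_ge (log M / δ)
  filter_upwards [eventually_ge_atTop (max N 1)] with k hk
  have hk1 : (1:ℝ) ≤ k := by exact_mod_cast (le_max_right N 1).trans hk
  have hkN : (N:ℝ) ≤ k := by exact_mod_cast (le_max_left N 1).trans hk
  have hloglam : 0 ≤ log lam := log_nonneg hlam
  rw [one_div_mul_eq_div, div_le_iff₀ (by linarith)]
  rcases (hR k).eq_or_lt with h0 | hpos
  · rw [← h0, log_zero]; positivity
  have hMpos : 0 < M := pos_of_mul_pos_left (hpos.trans_le (hRM k)) (by positivity)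
  have hlogM : log M ≤ k * δ := by
    rw [div_le_iff₀ hδ] at hN; nlinarith
  calc log (R k) ≤ log (M * lam ^ k) := log_le_log hpos (hRM k)
    _ = log M + k * log lam := by rw [log_mul hMpos.ne' (by positivity), log_pow]
    _ ≤ (log lam + δ) * k := by linarith

theorem decay_of_tails_jsq_stmt4_general
    (D : ℕ) (hD : 2 ≤ D) (β : ℝ) (hβ : (D:ℝ) / ((D:ℝ) - 1) < β)
    (q : ℝ)
    (hx : (D:ℝ) ^ (-q) ∈ Set.Ioo (0:ℝ) 1)
    (heq : 1 = ((D:ℝ) - 1) *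
      ((∑ j ∈ Finset.Icc 1 (⌊β⌋₊ - 1), ((D:ℝ) ^ (-q)) ^ j)
        + (β - (⌊β⌋₊ : ℝ)) * ((D:ℝ) ^ (-q)) ^ ⌊β⌋₊))
    (P : ℕ → ℝ) (hP : ∀ k, P k ∈ Set.Ioc (0:ℝ) 1)
    (C₁ : ℝ) (hC₁ : 0 < C₁)
    (hrec : ∀ k : ℕ, ⌊β⌋₊ ≤ k →
      C₁ * (3:ℝ) ^ (-(k:ℝ)) * (∏ i ∈ Finset.Ico (k - ⌊β⌋₊ + 1) k, P i ^ (D - 1))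
        * P (k - ⌊β⌋₊) ^ ((β - (⌊β⌋₊ : ℝ)) * ((D:ℝ) - 1)) ≤ P k) :
    ∀ ε : ℝ, 0 < ε → ∀ᶠ k : ℕ in Filter.atTop,
      (1 / (k:ℝ)) * (Real.log (Real.log (1 / P k)) / Real.log D) ≤ q + ε := by
  intro ε hε
  set L := ⌊β⌋₊
  set x := (D:ℝ) ^ (-q)
  set w : ℕ → ℝ := fun j => if j < L then ((D - 1 : ℕ) : ℝ) else (β - L) * ((D:ℝ) - 1)
  have hD1 : (1:ℝ) < D := by exact_mod_cast hD
  have hβ1 : 1 < β := by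
    have : (1:ℝ) < D / (D - 1) := by rw [lt_div_iff₀ (by linarith)]; linarith
    linarith
  have hL : 1 ≤ L := Nat.le_floor (by exact_mod_cast hβ1.le)
  have hw : ∀ j, 0 ≤ w j := fun j => by
    have hβL : 0 ≤ β - L := sub_nonneg.2 (Nat.floor_le (by linarith))
    simp only [w]; split_ifs <;> positivity
  have hwx : ∑ j ∈ Icc 1 L, w j * x ^ j = 1 := by
    rw [sum_Icc_ite_lt_mul hL, Nat.cast_pred (by omega)]; linear_combination -heq
  set lam := (D:ℝ) ^ (q + ε / 2)
  have hxlam : 1 < x * lam := by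
    rw [← rpow_add (by positivity)]; exact one_lt_rpow hD1 (by linarith)
  have hlam : 1 < lam := hxlam.trans_le (mul_le_of_le_one_left (by positivity) hx.2.le)
  obtain ⟨M, hM⟩ := exists_le_mul_pow_of_le_linear_recursion hw hlam
    (sum_div_pow_lt_one hw hx.1 hwx.le hxlam)
    (neg_log_le_linear_recursion (fun n => (hP n).1) hC₁ hL hrec)
  have hR : ∀ k, 0 ≤ -log (P k) := fun k => neg_nonneg.2 (log_nonpos (hP k).1.le (hP k).2)
  filter_upwards [eventually_inv_mul_log_le hR hM hlam.le
    (mul_pos (half_pos hε) (log_pos hD1))] with k hk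
  rw [one_div (P k), log_inv, ← mul_div_assoc, div_le_iff₀ (log_pos hD1)]
  rw [log_rpow (by positivity)] at hk
  linarith

/-- Comparison step for `β > D/(D-1)`: if `P : ℕ → (0,1]` satisfies `P_0 = 1` and the
lower recursion bound `P_k ≥ C₁ 3^{-k} (∏_{i=k-ℓ+1}^{k-1} P_i^{D-1}) P_{k-ℓ}^{β̂(D-1)}`
for `k ≥ ℓ`, where `ℓ = ⌊β⌋` and `β̂ = β - ⌊β⌋`, then
`limsup_{k→∞} (1/k) log_D log(1/P_k) ≤ q_D(β)`, where `q_D(β) = -log x(β)/log D`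
and `x(β)` is the unique root in `(0,1)` of
`1 = (D-1)(x + ⋯ + x^{ℓ-1} + β̂ x^{ℓ})`. -/
theorem decay_of_tails_jsq_stmt4
    (D : ℕ) (hD : 2 ≤ D) (β : ℝ) (hβ : (D:ℝ) / ((D:ℝ) - 1) < β)
    (q : ℝ)
    (hx : (D:ℝ) ^ (-q) ∈ Set.Ioo (0:ℝ) 1)
    (heq : 1 = ((D:ℝ) - 1) *
      ((∑ j ∈ Finset.Icc 1 (⌊β⌋₊ - 1), ((D:ℝ) ^ (-q)) ^ j)
        + (β - (⌊β⌋₊ : ℝ)) * ((D:ℝ) ^ (-q)) ^ ⌊β⌋₊))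
    (P : ℕ → ℝ) (hP : ∀ k, P k ∈ Set.Ioc (0:ℝ) 1) (hP0 : P 0 = 1)
    (C₁ : ℝ) (hC₁ : 0 < C₁)
    (hrec : ∀ k : ℕ, ⌊β⌋₊ ≤ k →
      C₁ * (3:ℝ) ^ (-(k:ℝ)) * (∏ i ∈ Finset.Ico (k - ⌊β⌋₊ + 1) k, P i ^ (D - 1))
        * P (k - ⌊β⌋₊) ^ ((β - (⌊β⌋₊ : ℝ)) * ((D:ℝ) - 1)) ≤ P k) :
    ∀ ε : ℝ, 0 < ε → ∀ᶠ k : ℕ in Filter.atTop,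
      (1 / (k:ℝ)) * (Real.log (Real.log (1 / P k)) / Real.log D) ≤ q + ε :=
  decay_of_tails_jsq_stmt4_general D hD β hβ q hx heq P hP C₁ hC₁ hrec
end

section
/- Let D ≥ 2 be an integer and C ∈ (0,1]. Suppose P : ℕ → (0,1] satisfies P_0 = 1 and P_k ≥ (C/(8k))^{k} · ∏_{i=0}^{k-1} P_i^{D-1} for all k ≥ 1. Then P_k ≥ (C/(8k))^{k D^{k}} for all k ≥ 1; consequently, limsup_{k→∞} (1/k) · log(log(1/P_k))/log D ≤ 1. -/
/-!
Write `a_k = C / (8k)`; it decreases in `k`, so by strong induction `P_i ≥ a_i ^ (i D^i) ≥ a_k ^ (i D^i)`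
for `1 ≤ i < k`, and the recursion gives `P_k ≥ a_k ^ e` with `e = k + (D - 1) ∑_{i<k} i D^i ≤ k D^k`.
Taking logarithms twice and using `log x ≤ x`, `log log (1/P_k) ≤ k log D + log (8k²/C)`,
and the error term is `o(k)`.
-/

open Filter Topology Finset Real

theorem add_sum_mul_pow_mul_pred_le (D : ℕ) (hD : 1 ≤ D) (k : ℕ) :
    k + ∑ i ∈ range k, i * D ^ i * (D - 1) ≤ k * D ^ k := by
  obtain ⟨d, rfl⟩ : ∃ d, D = d + 1 := ⟨D - 1, by omega⟩
  induction k with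
  | zero => simp
  | succ k ih =>
    have hpow : 1 ≤ (d + 1) ^ k := Nat.one_le_pow _ _ (by omega)
    rw [sum_range_succ, pow_succ]
    simp only [Nat.add_sub_cancel] at ih ⊢
    nlinarith

theorem pow_mul_pow_le_of_pow_mul_prod_le {D : ℕ} (hD : 1 ≤ D) {a P : ℕ → ℝ}
    (ha : ∀ k, 1 ≤ k → a k ∈ Set.Icc 0 1) (ha_anti : AntitoneOn a (Set.Ici 1)) (hP0 : 1 ≤ P 0)
    (hrec : ∀ k, 1 ≤ k → a k ^ k * ∏ i ∈ range k, P i ^ (D - 1) ≤ P k) :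
    ∀ k, 1 ≤ k → a k ^ (k * D ^ k) ≤ P k := by
  intro k
  induction k using Nat.strong_induction_on with
  | _ k ih =>
  intro hk
  obtain ⟨hak0, hak1⟩ := ha k hk
  have hfactor : ∀ i ∈ range k, a k ^ (i * D ^ i * (D - 1)) ≤ P i ^ (D - 1) := by
    intro i hi
    rw [pow_mul]
    refine pow_le_pow_left₀ (pow_nonneg hak0 _) ?_ _
    rcases Nat.eq_zero_or_pos i with rfl | hi1
    · simpa using hP0
    · have hik := mem_range.1 hi
      calc a k ^ (i * D ^ i) ≤ a i ^ (i * D ^ i) :=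
            pow_le_pow_left₀ hak0 (ha_anti (Set.mem_Ici.2 hi1) (Set.mem_Ici.2 hk) hik.le) _
        _ ≤ P i := ih i hik hi1
  calc a k ^ (k * D ^ k) ≤ a k ^ (k + ∑ i ∈ range k, i * D ^ i * (D - 1)) :=
        pow_le_pow_of_le_one hak0 hak1 (add_sum_mul_pow_mul_pred_le D hD k)
    _ = a k ^ k * ∏ i ∈ range k, a k ^ (i * D ^ i * (D - 1)) := by
        rw [pow_add, prod_pow_eq_pow_sum]
    _ ≤ a k ^ k * ∏ i ∈ range k, P i ^ (D - 1) :=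
        mul_le_mul_of_nonneg_left (prod_le_prod (fun _ _ => pow_nonneg hak0 _) hfactor)
          (pow_nonneg hak0 _)
    _ ≤ P k := hrec k hk

theorem log_le_log_of_nonneg_of_one_le {x y : ℝ} (hx : 0 ≤ x) (hxy : x ≤ y) (hy : 1 ≤ y) :
    log x ≤ log y := by
  rcases hx.eq_or_lt with rfl | hx
  · simpa using log_nonneg hy
  · exact log_le_log hx hxy

theorem log_one_div_le_of_pow_le {b p : ℝ} (hb : 0 < b) {n : ℕ} (h : b ^ n ≤ p) :
    log (1 / p) ≤ n / b :=
  calc log (1 / p) ≤ log (1 / b ^ n) :=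
        log_le_log (one_div_pos.2 ((pow_pos hb n).trans_le h))
          (one_div_le_one_div_of_le (pow_pos hb n) h)
    _ = n * log (1 / b) := by rw [← one_div_pow, log_pow]
    _ ≤ n * (1 / b) := by gcongr; exact log_le_self (by positivity)
    _ = n / b := by ring

theorem log_log_one_div_le {C p : ℝ} {D k : ℕ} (hC : C ∈ Set.Ioc 0 1) (hD : 1 ≤ D) (hk : 1 ≤ k)
    (hp : p ∈ Set.Ioc 0 1) (h : (C / (8 * k)) ^ (k * D ^ k) ≤ p) :
    log (log (1 / p)) ≤ k * log D + log (8 / C * k ^ 2) := by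
  have hk1 : (1 : ℝ) ≤ k := by exact_mod_cast hk
  have hC0 := hC.1
  have hbound : log (1 / p) ≤ (D : ℝ) ^ k * (8 / C * k ^ 2) :=
    (log_one_div_le_of_pow_le (by positivity) h).trans_eq (by push_cast; field_simp)
  have hM : 1 ≤ (D : ℝ) ^ k * (8 / C * k ^ 2) := by
    refine one_le_mul_of_one_le_of_one_le (one_le_pow₀ (by exact_mod_cast hD)) ?_
    rw [div_mul_eq_mul_div, le_div_iff₀ hC0]
    nlinarith [hC.2]
  calc log (log (1 / p)) ≤ log ((D : ℝ) ^ k * (8 / C * k ^ 2)) :=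
        log_le_log_of_nonneg_of_one_le (log_nonneg (one_le_one_div hp.1 hp.2)) hbound hM
    _ = k * log D + log (8 / C * k ^ 2) := by
        rw [log_mul (by positivity) (by positivity), log_pow]

theorem tendsto_log_mul_sq_div_atTop {c : ℝ} (hc : 0 < c) :
    Tendsto (fun x : ℝ => log (c * x ^ 2) / x) atTop (𝓝 0) := by
  have h : Tendsto (fun x : ℝ => log c * x⁻¹ + 2 * (log x / x)) atTop (𝓝 0) := by
    simpa using (tendsto_inv_atTop_zero.const_mul (log c)).add
      (isLittleO_log_id_atTop.tendsto_div_nhds_zero.const_mul 2)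
  refine h.congr' ?_
  filter_upwards [eventually_gt_atTop 0] with x hx
  rw [log_mul hc.ne' (by positivity), log_pow]
  field_simp
  push_cast
  ring

/-- The `β = ∞` case: if `P : ℕ → (0,1]` satisfies `P_0 = 1` and
`P_k ≥ (C/(8k))^k ∏_{i=0}^{k-1} P_i^{D-1}` for all `k ≥ 1`, then
`P_k ≥ (C/(8k))^{k D^k}` for all `k ≥ 1`, and consequently
`limsup_{k→∞} (1/k) log_D log(1/P_k) ≤ 1`. -/
theorem decay_of_tails_jsq_stmt7
    (D : ℕ) (hD : 2 ≤ D) (C : ℝ) (hC : C ∈ Set.Ioc (0:ℝ) 1)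
    (P : ℕ → ℝ) (hP : ∀ k, P k ∈ Set.Ioc (0:ℝ) 1) (hP0 : P 0 = 1)
    (hrec : ∀ k : ℕ, 1 ≤ k →
      (C / (8 * (k:ℝ))) ^ k * ∏ i ∈ Finset.range k, P i ^ (D - 1) ≤ P k) :
    (∀ k : ℕ, 1 ≤ k → (C / (8 * (k:ℝ))) ^ (k * D ^ k) ≤ P k) ∧
    ∀ ε : ℝ, 0 < ε → ∀ᶠ k : ℕ in Filter.atTop,
      (1 / (k:ℝ)) * (Real.log (Real.log (1 / P k)) / Real.log D) ≤ 1 + ε := by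
  have hD1 : 1 ≤ D := by omega
  have hC0 := hC.1
  have hlower : ∀ k : ℕ, 1 ≤ k → (C / (8 * (k:ℝ))) ^ (k * D ^ k) ≤ P k := by
    refine pow_mul_pow_le_of_pow_mul_prod_le hD1 (fun k hk => ⟨by positivity, ?_⟩) ?_ hP0.ge hrec
    · have hk1 : (1 : ℝ) ≤ k := by exact_mod_cast hk
      exact div_le_one_of_le₀ (by linarith [hC.2]) (by positivity)
    · intro i hi j _ hij
      have hi1 : (1 : ℝ) ≤ i := by exact_mod_cast hi
      exact div_le_div_of_nonneg_left hC0.le (by positivity) (by gcongr)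
  refine ⟨hlower, fun ε hε => ?_⟩
  have hlogD : 0 < log D := log_pos (by exact_mod_cast hD)
  have herr := ((tendsto_log_mul_sq_div_atTop (c := 8 / C) (by positivity)).comp
    tendsto_natCast_atTop_atTop).eventually_lt_const (mul_pos hε hlogD)
  filter_upwards [herr, eventually_ge_atTop 1] with k hk hk1
  have hk0 : (0 : ℝ) < k := by exact_mod_cast hk1
  have hll := log_log_one_div_le hC hD1 hk1 (hP k) (hlower k hk1)
  have hsmall : log (8 / C * k ^ 2) < ε * log D * k := (div_lt_iff₀ hk0).1 hk
  rw [one_div_mul_eq_div, div_div, div_le_iff₀ (by positivity)]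
  nlinarith
end

section
/- For all real λ ≥ 0 and φ ≥ 0 and every integer m ≥ 1, one has Σ_{j=m}^{∞} e^{-λ} (λ^{j}/j!) e^{φ j} ≤ (eλ/m)^{m} · exp(φ m + λ(e^{φ} - 1)). -/
open Filter Topology

lemma real_exp_tsum (x : ℝ) : Real.exp x = ∑' n : ℕ, x ^ n / n.factorial := by
  rw [Real.exp_eq_exp_ℝ, NormedSpace.exp_eq_tsum_div]

lemma pow_le_exp_pow_mul_factorial : ∀ n : ℕ, (n : ℝ) ^ n ≤ Real.exp 1 ^ n * n.factorial := by
  intro n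
  induction n with
  | zero => simp
  | succ n ih =>
    have hn : (0:ℝ) ≤ n := Nat.cast_nonneg n
    have key : ((n:ℝ) + 1) ^ n ≤ Real.exp 1 * (n:ℝ) ^ n := by
      rcases Nat.eq_zero_or_pos n with h | h
      · simp [h, Real.one_le_exp zero_le_one]
      · have hn' : (0:ℝ) < n := by exact_mod_cast h
        have h1 : (n:ℝ) + 1 ≤ (n:ℝ) * Real.exp (1 / n) := by
          have := Real.add_one_le_exp (1 / (n:ℝ))
          calc (n:ℝ) + 1 = (n:ℝ) * (1/(n:ℝ) + 1) := by field_simp; ring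
            _ ≤ (n:ℝ) * Real.exp (1/n) := by
                exact mul_le_mul_of_nonneg_left this hn
        calc ((n:ℝ)+1)^n ≤ ((n:ℝ) * Real.exp (1/n))^n := by
              apply pow_le_pow_left₀ (by positivity) h1
          _ = (n:ℝ)^n * Real.exp (1/n) ^ n := mul_pow _ _ _
          _ = (n:ℝ)^n * Real.exp 1 := by
              rw [← Real.exp_nat_mul]
              congr 1
              field_simp
          _ = Real.exp 1 * (n:ℝ)^n := mul_comm _ _
    have : ((n:ℝ) + 1) ^ (n+1) = ((n:ℝ)+1) * ((n:ℝ)+1)^n := by ring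
    push_cast
    rw [this]
    calc ((n:ℝ)+1) * ((n:ℝ)+1)^n ≤ ((n:ℝ)+1) * (Real.exp 1 * (n:ℝ)^n) :=
          mul_le_mul_of_nonneg_left key (by positivity)
      _ ≤ ((n:ℝ)+1) * (Real.exp 1 * (Real.exp 1 ^ n * n.factorial)) := by
          apply mul_le_mul_of_nonneg_left _ (by positivity)
          exact mul_le_mul_of_nonneg_left ih (Real.exp_pos 1).le
      _ = Real.exp 1 ^ (n+1) * (((n:ℝ)+1) * n.factorial) := by ring
      _ = Real.exp 1 ^ (n+1) * (n+1).factorial := by rw [Nat.factorial_succ]; push_cast; ring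


/-- Exponentially weighted Poisson tail bound: for all `λ ≥ 0`, `φ ≥ 0` and every
integer `m ≥ 1`,
`Σ_{j=m}^{∞} e^{-λ} (λ^j/j!) e^{φ j} ≤ (eλ/m)^m exp(φ m + λ(e^φ - 1))`. -/
theorem decay_of_tails_jsq_stmt11
    (lam φ : ℝ) (hlam : 0 ≤ lam) (hφ : 0 ≤ φ) (m : ℕ) (hm : 1 ≤ m) :
    ∑' j : ℕ, Real.exp (-lam) * (lam ^ (m + j) / (Nat.factorial (m + j) : ℝ)) *
        Real.exp (φ * ((m + j : ℕ) : ℝ)) ≤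
      (Real.exp 1 * lam / (m:ℝ)) ^ m * Real.exp (φ * (m:ℝ) + lam * (Real.exp φ - 1)) := by
  have hm' : (m:ℝ)^m ≤ Real.exp 1 ^ m * m.factorial := pow_le_exp_pow_mul_factorial m
  have hmpos : (0:ℝ) < m := by exact_mod_cast hm
  set C : ℝ := (Real.exp 1 * lam / (m:ℝ)) ^ m * Real.exp (φ * m) * Real.exp (-lam) with hCdef
  have hterm : ∀ j : ℕ,
      Real.exp (-lam) * (lam ^ (m + j) / (Nat.factorial (m + j) : ℝ)) *
        Real.exp (φ * ((m + j : ℕ) : ℝ)) ≤ C * ((lam * Real.exp φ) ^ j / j.factorial) := by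
    intro j
    have hfac : (m.factorial * j.factorial : ℝ) ≤ ((m+j).factorial : ℝ) := by
      exact_mod_cast Nat.le_of_dvd (Nat.factorial_pos _)
        (Nat.factorial_mul_factorial_dvd_factorial_add m j)
    have hle : (m:ℝ)^m * j.factorial ≤ Real.exp 1 ^ m * ((m+j).factorial : ℝ) := by
      calc (m:ℝ)^m * j.factorial ≤ (Real.exp 1 ^ m * m.factorial) * j.factorial := by
            exact mul_le_mul_of_nonneg_right hm' (Nat.cast_nonneg _)
        _ = Real.exp 1 ^ m * (m.factorial * j.factorial : ℝ) := by ring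
        _ ≤ Real.exp 1 ^ m * ((m+j).factorial : ℝ) :=
            mul_le_mul_of_nonneg_left hfac (by positivity)
    have key : lam^m * lam^j / ((m+j).factorial : ℝ) ≤
        (Real.exp 1 * lam / (m:ℝ))^m * (lam^j / j.factorial) := by
      have hrhs : (Real.exp 1 * lam / (m:ℝ))^m * (lam^j / j.factorial)
          = (Real.exp 1 ^ m * lam^m * lam^j) / ((m:ℝ)^m * j.factorial) := by
        rw [div_pow, mul_pow]; field_simp
      rw [hrhs, div_le_div_iff₀ (by positivity) (by positivity)]
      calc lam^m * lam^j * ((m:ℝ)^m * j.factorial)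
          = (lam^m * lam^j) * ((m:ℝ)^m * j.factorial) := by ring
        _ ≤ (lam^m * lam^j) * (Real.exp 1 ^ m * ((m+j).factorial : ℝ)) :=
            mul_le_mul_of_nonneg_left hle (by positivity)
        _ = Real.exp 1 ^ m * lam^m * lam^j * ((m+j).factorial : ℝ) := by ring
    calc Real.exp (-lam) * (lam ^ (m + j) / (Nat.factorial (m + j) : ℝ)) *
          Real.exp (φ * ((m + j : ℕ) : ℝ))
        = Real.exp (-lam) * Real.exp (φ * m) * Real.exp φ ^ j *
            (lam^m * lam^j / ((m+j).factorial : ℝ)) := by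
          push_cast
          rw [pow_add, mul_add, Real.exp_add, mul_comm φ (j:ℝ), Real.exp_nat_mul]
          ring
      _ ≤ Real.exp (-lam) * Real.exp (φ * m) * Real.exp φ ^ j *
            ((Real.exp 1 * lam / (m:ℝ))^m * (lam^j / j.factorial)) :=
          mul_le_mul_of_nonneg_left key (by positivity)
      _ = C * ((lam * Real.exp φ) ^ j / j.factorial) := by
          rw [hCdef, mul_pow]; ring
  have hg : Summable (fun j : ℕ => C * ((lam * Real.exp φ) ^ j / j.factorial)) :=
    (Real.summable_pow_div_factorial _).mul_left C
  have hT : Summable (fun j : ℕ =>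
      Real.exp (-lam) * (lam ^ (m + j) / (Nat.factorial (m + j) : ℝ)) *
        Real.exp (φ * ((m + j : ℕ) : ℝ))) := by
    apply Summable.of_nonneg_of_le (fun j => by positivity) hterm hg
  calc _ ≤ ∑' j : ℕ, C * ((lam * Real.exp φ) ^ j / j.factorial) := Summable.tsum_le_tsum hterm hT hg
    _ = C * Real.exp (lam * Real.exp φ) := by rw [tsum_mul_left, ← real_exp_tsum]
    _ = (Real.exp 1 * lam / (m:ℝ)) ^ m * Real.exp (φ * (m:ℝ) + lam * (Real.exp φ - 1)) := by
        rw [hCdef, mul_assoc, mul_assoc, ← Real.exp_add, ← Real.exp_add]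
        congr 2
        ring
end

section
/- Let D ≥ 2 be an integer, c₂ > 0 and s₀ ≥ 1 reals, and let F be a Borel probability measure on [0,∞) with mean ∫ s dF(s) = 1 and tail F((s,∞)) ≤ c₂ s^{-D/(D-1)} for all s ≥ s₀. For q > 0 and an integer h ≥ 1, define J_h(s) = e^{-qs} Σ_{i=h}^{∞} (qs)^{i}/i!. Suppose h ≥ 6, k is a real number with k ≥ D·max(c₂, 1/c₂)·s₀^{2h}·h^{h+1}, and 0 < q ≤ min(c₂, k^{-(D-1)(h+1)}). Then ∫_0^{∞} (k+s) J_h(s) dF(s) ≤ 55 D c₂ (q/h)^{1/(D-1)}. -/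
/-!
Put `T = h / (2q)`. For `s ≤ T` the weight `k + s` is at most `h / q` (as `k q ≤ 1`), and for
`s > T` we have `k ≤ T < s`, so `(k + s) J_h(s) ≤ 2s`; the tail hypothesis bounds
`∫_{s > T} s dF` by `D c₂ T^{-1/(D-1)}`.

Since `J_h(0) = 0` and `J_h'(t) = q^h t^{h-1} e^{-qt} / (h-1)!` is the Erlang density, the layer
cake formula gives `∫ J_h(min s T) dF = ∫_0^T F((t, ∞)) J_h'(t) dt`. For `t ≤ s₀` the integrand
is at most `q^h s₀^{h-1}`, which is negligible because `q ≤ k⁻¹` is tiny. For `s₀ < t ≤ T` the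
tail bound turns it into `c₂ q^h t^{h-1-β} e^{-qt} / (h-1)!` with `β = D/(D-1)`, and
`t ↦ t^{h-1-β} e^{-qt}` increases on `[0, T]` since `qT = h/2 ≤ h-1-β`. At `t = T` the estimates
`h^h / h! ≤ e^h` and `√e / 2 < 17/20` leave `5 c₂ T^{1-β}`, and `T^{1-β} ≤ 2 (q/h)^{1/(D-1)}`.
-/

open Filter Topology MeasureTheory

/-- `J q h s = e^{-qs} Σ_{i=h}^{∞} (qs)^i/i!`, the probability that a Poisson random
variable with mean `qs` is at least `h`. -/
noncomputable def jsqPoissonTail (q : ℝ) (h : ℕ) (s : ℝ) : ℝ :=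
  Real.exp (-(q * s)) * ∑' i : ℕ, (q * s) ^ (h + i) / (Nat.factorial (h + i) : ℝ)

open Set Real Finset
open scoped Nat

lemma jsqPoissonTail_eq_one_sub (q : ℝ) (h : ℕ) (s : ℝ) :
    jsqPoissonTail q h s = 1 - exp (-(q * s)) * ∑ i ∈ range h, (q * s) ^ i / i ! := by
  have hsplit := (Real.summable_pow_div_factorial (q * s)).sum_add_tsum_nat_add h
  rw [← show exp (q * s) = ∑' i : ℕ, (q * s) ^ i / (i ! : ℝ) by
    rw [Real.exp_eq_exp_ℝ, NormedSpace.exp_eq_tsum_div]] at hsplit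
  simp only [add_comm _ h] at hsplit
  rw [jsqPoissonTail, eq_sub_iff_add_eq, ← mul_add, add_comm, hsplit, ← exp_add]
  simp

lemma jsqPoissonTail_nonneg {q s : ℝ} (h : ℕ) (hqs : 0 ≤ q * s) : 0 ≤ jsqPoissonTail q h s :=
  mul_nonneg (exp_nonneg _) (tsum_nonneg fun _ => by positivity)

lemma jsqPoissonTail_le_one {q s : ℝ} (h : ℕ) (hqs : 0 ≤ q * s) : jsqPoissonTail q h s ≤ 1 := by
  rw [jsqPoissonTail_eq_one_sub]
  have : 0 ≤ exp (-(q * s)) * ∑ i ∈ range h, (q * s) ^ i / i ! := by positivity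
  linarith

lemma continuous_jsqPoissonTail (q : ℝ) (h : ℕ) : Continuous (jsqPoissonTail q h) := by
  rw [funext (jsqPoissonTail_eq_one_sub q h)]
  fun_prop

lemma jsqPoissonTail_zero_right (q : ℝ) {h : ℕ} (hh : 0 < h) : jsqPoissonTail q h 0 = 0 := by
  simp [jsqPoissonTail, hh.ne']

lemma hasDerivAt_sum_range_pow_div_factorial (n : ℕ) (x : ℝ) :
    HasDerivAt (fun x : ℝ => ∑ i ∈ range (n + 1), x ^ i / i !)
      (∑ i ∈ range n, x ^ i / i !) x := by
  induction n with
  | zero => simpa using hasDerivAt_const x (1 : ℝ)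
  | succ n ih =>
    simp only [sum_range_succ _ (n + 1)]
    refine (ih.add ((hasDerivAt_pow (n + 1) x).div_const ((n + 1)! : ℝ))).congr_deriv ?_
    rw [sum_range_succ, Nat.factorial_succ]
    push_cast
    field_simp

lemma hasDerivAt_jsqPoissonTail (q : ℝ) {h : ℕ} (hh : 0 < h) (t : ℝ) :
    HasDerivAt (jsqPoissonTail q h) (q ^ h * t ^ (h - 1) * exp (-(q * t)) / (h - 1)!) t := by
  obtain ⟨n, rfl⟩ : ∃ n, h = n + 1 := ⟨h - 1, by omega⟩
  have hlin : HasDerivAt (fun t => q * t) q t := by simpa using (hasDerivAt_id t).const_mul q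
  have hE := hlin.neg.exp.mul ((hasDerivAt_sum_range_pow_div_factorial n (q * t)).comp t hlin)
  rw [funext (jsqPoissonTail_eq_one_sub q (n + 1))]
  refine (hE.const_sub 1).congr_deriv ?_
  simp only [Nat.add_sub_cancel, sum_range_succ, Function.comp_def, Pi.neg_apply]
  field_simp
  ring

lemma rpow_mul_exp_neg_mul_le {a q x y : ℝ} (hq : 0 ≤ q) (hx : 0 < x) (hxy : x ≤ y)
    (hya : q * y ≤ a) : x ^ a * exp (-(q * x)) ≤ y ^ a * exp (-(q * y)) := by
  have hy : 0 < y := hx.trans_le hxy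
  rw [rpow_def_of_pos hx, rpow_def_of_pos hy, ← exp_add, ← exp_add, exp_le_exp]
  have hlog : (y - x) / y ≤ log y - log x := by
    have := one_sub_inv_le_log_of_pos (div_pos hy hx)
    rw [log_div hy.ne' hx.ne', inv_div] at this
    rwa [sub_div, div_self hy.ne']
  have hfrac : 0 ≤ (y - x) / y := div_nonneg (sub_nonneg.2 hxy) hy.le
  have : q * (y - x) ≤ a * (log y - log x) :=
    calc q * (y - x) = q * y * ((y - x) / y) := by field_simp
      _ ≤ a * ((y - x) / y) := mul_le_mul_of_nonneg_right hya hfrac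
      _ ≤ a * (log y - log x) :=
          mul_le_mul_of_nonneg_left hlog ((by positivity : 0 ≤ q * y).trans hya)
  linarith

lemma exp_one_half_le : exp (1 / 2 : ℝ) ≤ 17 / 10 := by
  have h := exp_one_lt_d9
  rw [show (1 : ℝ) = 1 / 2 + 1 / 2 by norm_num, exp_add] at h
  nlinarith [exp_pos (1 / 2 : ℝ)]

lemma natCast_mul_pow_le_five_halves {h : ℕ} (hh : 6 ≤ h) : (h : ℝ) * (17 / 20) ^ h ≤ 5 / 2 := by
  induction h, hh using Nat.le_induction with
  | base => norm_num
  | succ n hn ih =>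
    have hn' : (6 : ℝ) ≤ n := by exact_mod_cast hn
    calc ((n + 1 : ℕ) : ℝ) * (17 / 20) ^ (n + 1) = (17 / 20 * (n + 1)) * (17 / 20) ^ n := by
          push_cast; ring
      _ ≤ n * (17 / 20) ^ n := by gcongr; linarith
      _ ≤ 5 / 2 := ih

lemma mul_half_pow_mul_exp_div_factorial_le {h : ℕ} (hh : 6 ≤ h) :
    h * ((h : ℝ) / 2) ^ (h - 1) * exp (-(h / 2)) / (h - 1)! ≤ 5 := by
  have hfact : (h : ℝ) * (h - 1)! = h ! := by exact_mod_cast Nat.mul_factorial_pred (by omega)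
  have hpow : (h : ℝ) * ((h : ℝ) / 2) ^ (h - 1) = 2 * ((h : ℝ) / 2) ^ h := by
    rw [← Nat.sub_add_cancel (show 1 ≤ h by omega), pow_succ, Nat.add_sub_cancel]
    push_cast
    ring
  have hexp : exp (h : ℝ) * exp (-(h / 2)) = exp (1 / 2) ^ h := by
    rw [← exp_add, ← exp_nat_mul]; ring_nf
  calc h * ((h : ℝ) / 2) ^ (h - 1) * exp (-(h / 2)) / (h - 1)!
      = 2 * h * ((h : ℝ) ^ h / h !) * exp (-(h / 2)) / 2 ^ h := by
        rw [hpow, ← hfact, div_pow]; field_simp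
    _ ≤ 2 * h * exp (h : ℝ) * exp (-(h / 2)) / 2 ^ h := by
        gcongr; exact pow_div_factorial_le_exp _ (by positivity) h
    _ = 2 * (h * (exp (1 / 2) / 2) ^ h) := by rw [mul_assoc _ (exp _), hexp, div_pow]; ring
    _ ≤ 2 * (h * (17 / 20) ^ h) := by
        have : exp (1 / 2) / 2 ≤ 17 / 20 := by linarith [exp_one_half_le]
        gcongr
    _ ≤ 5 := by linarith [natCast_mul_pow_le_five_halves hh]

lemma lintegral_ofReal_comp_min_le {μ : Measure ℝ} (hμ : ∀ᵐ s ∂μ, 0 ≤ s)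
    {f f' : ℝ → ℝ} {T : ℝ} (hT : 0 ≤ T) (hf0 : f 0 = 0)
    (hf : ∀ t ∈ Icc 0 T, HasDerivAt f (f' t) t) (hf' : Continuous f')
    (hf'_nonneg : ∀ t ∈ Ioc 0 T, 0 ≤ f' t) :
    ∫⁻ s, ENNReal.ofReal (f (min s T)) ∂μ ≤
      ∫⁻ t in Ioc 0 T, μ (Ioi t) * ENNReal.ofReal (f' t) := by
  set g := (Iic T).indicator f'
  have hg : ∀ x ∈ Icc 0 T, ∫ t in 0..x, g t = f x := by
    intro x hx
    have hsub : uIcc 0 x ⊆ Icc 0 T := by rw [uIcc_of_le hx.1]; exact Icc_subset_Icc_right hx.2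
    rw [intervalIntegral.integral_congr (g := f') fun t ht =>
        indicator_of_mem (show t ∈ Iic T from (hsub ht).2) _,
      intervalIntegral.integral_eq_sub_of_hasDerivAt (fun t ht => hf t (hsub ht))
        (hf'.intervalIntegrable 0 x), hf0, sub_zero]
  have hg_int : ∀ t > 0, IntervalIntegrable g volume 0 t := fun t _ =>
    intervalIntegrable_iff.2
      ((intervalIntegrable_iff.1 (hf'.intervalIntegrable 0 t)).indicator measurableSet_Iic)
  have hg_nonneg : ∀ᵐ t ∂volume.restrict (Ioi 0), 0 ≤ g t :=
    ae_restrict_of_forall_mem measurableSet_Ioi fun t (ht : 0 < t) => by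
      simp only [g, indicator]
      split_ifs with htT
      exacts [hf'_nonneg t ⟨ht, htT⟩, le_rfl]
  calc ∫⁻ s, ENNReal.ofReal (f (min s T)) ∂μ
      = ∫⁻ s, ENNReal.ofReal (∫ t in 0..min s T, g t) ∂μ :=
        lintegral_congr_ae (hμ.mono fun s hs => by
          dsimp only
          rw [hg _ ⟨le_min hs hT, min_le_right _ _⟩])
    _ = ∫⁻ t in Ioi 0, μ {s | t < min s T} * ENNReal.ofReal (g t) :=
        lintegral_comp_eq_lintegral_meas_lt_mul μ (hμ.mono fun s hs => le_min hs hT)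
          (measurable_id.min measurable_const).aemeasurable hg_int hg_nonneg
    _ ≤ ∫⁻ t in Ioi 0, (Iic T).indicator (fun t => μ (Ioi t) * ENNReal.ofReal (f' t)) t := by
        refine lintegral_mono fun t => ?_
        by_cases htT : t ∈ Iic T
        · rw [indicator_of_mem htT, show g t = f' t from indicator_of_mem htT _]
          exact mul_le_mul_left (measure_mono fun s (hs : t < min s T) =>
            show t < s from hs.trans_le (min_le_left _ _)) _
        · simp [g, indicator_of_notMem htT]
    _ = ∫⁻ t in Ioc 0 T, μ (Ioi t) * ENNReal.ofReal (f' t) := by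
        rw [lintegral_indicator measurableSet_Iic, Measure.restrict_restrict measurableSet_Iic,
          Iic_inter_Ioi]

lemma lintegral_Ioi_ofReal_le_of_tail (μ : Measure ℝ) {c β T : ℝ} (hc : 0 ≤ c) (hβ : 1 < β)
    (hT : 0 < T) (htail : ∀ s, T ≤ s → μ (Ioi s) ≤ ENNReal.ofReal (c * s ^ (-β))) :
    ∫⁻ s in Ioi T, ENNReal.ofReal s ∂μ ≤ ENNReal.ofReal (c * T ^ (1 - β) * (β / (β - 1))) := by
  rw [lintegral_eq_lintegral_meas_lt (f := fun s => s) _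
      (ae_restrict_of_forall_mem measurableSet_Ioi fun s hs => (hT.trans hs).le) aemeasurable_id,
    ← Ioc_union_Ioi_eq_Ioi hT.le, lintegral_union measurableSet_Ioi Ioc_disjoint_Ioi_same]
  have hnear : ∫⁻ t in Ioc 0 T, μ.restrict (Ioi T) {s | t < s} ≤
      ENNReal.ofReal (c * T ^ (1 - β)) :=
    calc ∫⁻ t in Ioc 0 T, μ.restrict (Ioi T) {s | t < s}
        ≤ ∫⁻ _ in Ioc 0 T, ENNReal.ofReal (c * T ^ (-β)) :=
          lintegral_mono fun t => (measure_mono (subset_univ _)).trans <| by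
            rw [Measure.restrict_apply_univ]; exact htail T le_rfl
      _ = ENNReal.ofReal (c * T ^ (1 - β)) := by
          rw [setLIntegral_const, Real.volume_Ioc, sub_zero, ← ENNReal.ofReal_mul (by positivity),
            show 1 - β = -β + 1 by ring, Real.rpow_add_one hT.ne', mul_assoc]
  have hfar : ∫⁻ t in Ioi T, μ.restrict (Ioi T) {s | t < s} ≤
      ENNReal.ofReal (c * T ^ (1 - β) / (β - 1)) :=
    calc ∫⁻ t in Ioi T, μ.restrict (Ioi T) {s | t < s}
        ≤ ∫⁻ t in Ioi T, ENNReal.ofReal (c * t ^ (-β)) :=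
          setLIntegral_mono' measurableSet_Ioi fun t ht =>
            (Measure.restrict_apply_le _ _).trans (htail t (le_of_lt ht))
      _ = ENNReal.ofReal (∫ t in Ioi T, c * t ^ (-β)) :=
          (ofReal_integral_eq_lintegral_ofReal
            ((integrableOn_Ioi_rpow_of_lt (by linarith) hT).const_mul c)
            (ae_restrict_of_forall_mem measurableSet_Ioi fun t ht =>
              mul_nonneg hc (rpow_nonneg (hT.trans ht).le _))).symm
      _ = ENNReal.ofReal (c * T ^ (1 - β) / (β - 1)) := by
          rw [integral_const_mul, integral_Ioi_rpow_of_lt (by linarith) hT]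
          rw [show -β + 1 = -(β - 1) by ring, show 1 - β = -(β - 1) by ring, neg_div_neg_eq,
            mul_div_assoc]
  calc _ ≤ ENNReal.ofReal (c * T ^ (1 - β)) + ENNReal.ofReal (c * T ^ (1 - β) / (β - 1)) :=
        add_le_add hnear hfar
    _ = ENNReal.ofReal (c * T ^ (1 - β) * (β / (β - 1))) := by
        rw [← ENNReal.ofReal_add (by positivity) (div_nonneg (by positivity) (by linarith))]
        congr 1
        field_simp [show β - 1 ≠ 0 by linarith]
        ring

lemma measure_Ioi_mul_jsqPoissonTail_deriv_le (μ : Measure ℝ) [IsProbabilityMeasure μ]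
    {c β s₀ q T t : ℝ} (hc : 0 ≤ c) (hs₀ : 0 ≤ s₀)
    (htail : ∀ s, s₀ ≤ s → μ (Ioi s) ≤ ENNReal.ofReal (c * s ^ (-β)))
    (hq : 0 ≤ q) {h : ℕ} (hqT : q * T ≤ (h - 1 : ℕ) - β) (ht : t ∈ Ioc 0 T) :
    μ (Ioi t) * ENNReal.ofReal (q ^ h * t ^ (h - 1) * exp (-(q * t)) / (h - 1)!) ≤
      ENNReal.ofReal (q ^ h * s₀ ^ (h - 1) +
        c * q ^ h * T ^ ((h - 1 : ℕ) - β) * exp (-(q * T)) / (h - 1)!) := by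
  obtain ⟨ht, htT⟩ := ht
  have hT : 0 < T := ht.trans_le htT
  set f := q ^ h * t ^ (h - 1) * exp (-(q * t)) / (h - 1)!
  set A := q ^ h * s₀ ^ (h - 1)
  set B := c * q ^ h * T ^ ((h - 1 : ℕ) - β) * exp (-(q * T)) / (h - 1)!
  have hA : 0 ≤ A := by positivity
  have hB : 0 ≤ B := by positivity
  rcases le_or_gt t s₀ with hts₀ | hts₀
  · have hf : f ≤ A := by
      have hfact : (1 : ℝ) ≤ (h - 1)! := by exact_mod_cast (h - 1).factorial_pos
      calc f ≤ q ^ h * t ^ (h - 1) * 1 / 1 := by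
            simp only [f]
            gcongr
            exact exp_le_one_iff.2 (by nlinarith)
        _ ≤ q ^ h * s₀ ^ (h - 1) := by rw [mul_one, div_one]; gcongr
    calc μ (Ioi t) * ENNReal.ofReal f ≤ 1 * ENNReal.ofReal A :=
          mul_le_mul' prob_le_one (ENNReal.ofReal_le_ofReal hf)
      _ ≤ ENNReal.ofReal (A + B) := by rw [one_mul]; exact ENNReal.ofReal_le_ofReal (by linarith)
  · have hf : c * t ^ (-β) * f ≤ B := by
      have hmono := rpow_mul_exp_neg_mul_le hq ht htT hqT
      rw [sub_eq_neg_add, rpow_add ht, rpow_natCast] at hmono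
      calc c * t ^ (-β) * f
          = c * q ^ h * (t ^ (-β) * t ^ (h - 1) * exp (-(q * t))) / (h - 1)! := by ring
        _ ≤ c * q ^ h * (T ^ (-β + (h - 1 : ℕ)) * exp (-(q * T))) / (h - 1)! := by gcongr
        _ = B := by rw [neg_add_eq_sub]; ring
    calc μ (Ioi t) * ENNReal.ofReal f ≤ ENNReal.ofReal (c * t ^ (-β)) * ENNReal.ofReal f :=
          mul_le_mul_left (htail t hts₀.le) _
      _ = ENNReal.ofReal (c * t ^ (-β) * f) := (ENNReal.ofReal_mul (by positivity)).symm
      _ ≤ ENNReal.ofReal (A + B) := ENNReal.ofReal_le_ofReal (by linarith)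

lemma lintegral_jsqPoissonTail_min_le (μ : Measure ℝ) [IsProbabilityMeasure μ]
    (hμ : ∀ᵐ s ∂μ, 0 ≤ s) {c β s₀ q T : ℝ} (hc : 0 ≤ c) (hs₀ : 0 ≤ s₀)
    (htail : ∀ s, s₀ ≤ s → μ (Ioi s) ≤ ENNReal.ofReal (c * s ^ (-β)))
    (hq : 0 ≤ q) (hT : 0 < T) {h : ℕ} (hh : 0 < h) (hqT : q * T ≤ (h - 1 : ℕ) - β) :
    ∫⁻ s, ENNReal.ofReal (jsqPoissonTail q h (min s T)) ∂μ ≤ ENNReal.ofReal (T *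
      (q ^ h * s₀ ^ (h - 1) + c * q ^ h * T ^ ((h - 1 : ℕ) - β) * exp (-(q * T)) / (h - 1)!)) := by
  refine (lintegral_ofReal_comp_min_le hμ hT.le (jsqPoissonTail_zero_right q hh)
    (fun t _ => hasDerivAt_jsqPoissonTail q hh t) (by fun_prop)
    (fun t ht => by have := ht.1.le; positivity)).trans ?_
  refine (setLIntegral_mono' measurableSet_Ioc fun t ht =>
    measure_Ioi_mul_jsqPoissonTail_deriv_le μ hc hs₀ htail hq hqT ht).trans_eq ?_
  rw [setLIntegral_const, Real.volume_Ioc, sub_zero, ← ENNReal.ofReal_mul (by positivity),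
    mul_comm]

lemma lintegral_ofReal_mul_jsqPoissonTail_le (μ : Measure ℝ) (hμ : ∀ᵐ s ∂μ, 0 ≤ s)
    {q k T : ℝ} (hq : 0 < q) (hk : 0 ≤ k) (hkT : k ≤ T) (h : ℕ) (hkTh : k + T ≤ h / q) :
    ∫⁻ s, ENNReal.ofReal ((k + s) * jsqPoissonTail q h s) ∂μ ≤
      ENNReal.ofReal (h / q) * ∫⁻ s, ENNReal.ofReal (jsqPoissonTail q h (min s T)) ∂μ +
        2 * ∫⁻ s in Ioi T, ENNReal.ofReal s ∂μ := by
  rw [← lintegral_add_compl _ measurableSet_Iic, compl_Iic]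
  gcongr
  · rw [← lintegral_const_mul' _ _ ENNReal.ofReal_ne_top]
    refine (setLIntegral_mono_ae' measurableSet_Iic (hμ.mono fun s hs (hsT : s ≤ T) => ?_)).trans
      (setLIntegral_le_lintegral _ _)
    rw [← ENNReal.ofReal_mul (by positivity), min_eq_left hsT]
    exact ENNReal.ofReal_le_ofReal (mul_le_mul_of_nonneg_right (by linarith)
      (jsqPoissonTail_nonneg h (by positivity)))
  · rw [← lintegral_const_mul' _ _ ENNReal.ofNat_ne_top]
    refine setLIntegral_mono' measurableSet_Ioi fun s (hs : T < s) => ?_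
    rw [← ENNReal.ofReal_ofNat, ← ENNReal.ofReal_mul zero_le_two]
    have hqs : 0 ≤ q * s := by nlinarith
    have hJ0 := jsqPoissonTail_nonneg h hqs
    have hJ1 := jsqPoissonTail_le_one h hqs
    exact ENNReal.ofReal_le_ofReal (by nlinarith)

lemma integral_mul_jsqPoissonTail_le (μ : Measure ℝ) [IsProbabilityMeasure μ]
    (hμ : ∀ᵐ s ∂μ, 0 ≤ s) {c β s₀ q k T : ℝ} (hc : 0 ≤ c) (hβ : 1 < β) (hs₀ : 0 < s₀)
    (hs₀T : s₀ ≤ T) (htail : ∀ s, s₀ ≤ s → μ (Ioi s) ≤ ENNReal.ofReal (c * s ^ (-β)))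
    (hq : 0 < q) (hk : 0 ≤ k) (hkT : k ≤ T) {h : ℕ} (hh : 0 < h) (hkTh : k + T ≤ h / q)
    (hqT : q * T ≤ (h - 1 : ℕ) - β) :
    ∫ s, (k + s) * jsqPoissonTail q h s ∂μ ≤
      h / q * (T * (q ^ h * s₀ ^ (h - 1) +
        c * q ^ h * T ^ ((h - 1 : ℕ) - β) * exp (-(q * T)) / (h - 1)!)) +
      2 * (c * T ^ (1 - β) * (β / (β - 1))) := by
  have hT : 0 < T := hs₀.trans_le hs₀T
  have hcont : Continuous fun s => (k + s) * jsqPoissonTail q h s :=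
    (continuous_const.add continuous_id).mul (continuous_jsqPoissonTail q h)
  rw [integral_eq_lintegral_of_nonneg_ae
    (hμ.mono fun s hs => mul_nonneg (by linarith) (jsqPoissonTail_nonneg h (by positivity)))
    hcont.aestronglyMeasurable]
  refine ENNReal.toReal_le_of_le_ofReal (by positivity)
    ((lintegral_ofReal_mul_jsqPoissonTail_le μ hμ hq hk hkT h hkTh).trans ?_)
  rw [ENNReal.ofReal_add (by positivity) (by positivity), ENNReal.ofReal_mul (by positivity),
    ENNReal.ofReal_mul zero_le_two, ENNReal.ofReal_ofNat]
  gcongr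
  · exact lintegral_jsqPoissonTail_min_le μ hμ hc hs₀.le htail hq.le hT hh hqT
  · exact lintegral_Ioi_ofReal_le_of_tail μ hc hβ hT fun s hs => htail s (hs₀T.trans hs)

lemma div_sub_one_bounds {d : ℝ} (hd : 2 ≤ d) :
    1 < d / (d - 1) ∧ d / (d - 1) ≤ 2 ∧ 1 / (d - 1) = d / (d - 1) - 1 ∧
      d / (d - 1) / (d / (d - 1) - 1) = d := by
  have hd1 : d - 1 ≠ 0 := by linarith
  have hγ : 1 / (d - 1) = d / (d - 1) - 1 := by field_simp; ring
  refine ⟨by rw [one_lt_div] <;> linarith, by rw [div_le_iff₀] <;> linarith, hγ, ?_⟩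
  rw [← hγ]
  field_simp

lemma pow_three_mul_pow_le_of_le {D c s₀ k : ℝ} {h : ℕ} (hD : 1 ≤ D) (hc : 0 < c) (hs₀ : 1 ≤ s₀)
    (hh : 2 ≤ h) (hk : D * max c c⁻¹ * s₀ ^ (2 * h) * (h : ℝ) ^ (h + 1) ≤ k) :
    (h : ℝ) ^ 3 * s₀ ^ (h - 1) ≤ k := by
  have hmax : 1 ≤ max c c⁻¹ := by
    rcases le_total c 1 with hc1 | hc1
    · exact le_max_of_le_right ((one_le_inv₀ hc).2 hc1)
    · exact le_max_of_le_left hc1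
  have hh1 : (1 : ℝ) ≤ h := by exact_mod_cast (by omega : 1 ≤ h)
  calc (h : ℝ) ^ 3 * s₀ ^ (h - 1) ≤ 1 * 1 * s₀ ^ (2 * h) * (h : ℝ) ^ (h + 1) := by
        rw [one_mul, one_mul, mul_comm]
        gcongr <;> first | assumption | omega
    _ ≤ k := le_trans (by gcongr) hk

lemma mul_le_one_of_le_rpow_neg {k q e : ℝ} (hk : 1 ≤ k) (he : 1 ≤ e) (hq : q ≤ k ^ (-e)) :
    k * q ≤ 1 :=
  calc k * q ≤ k * k ^ (-1 : ℝ) :=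
        mul_le_mul_of_nonneg_left (hq.trans (rpow_le_rpow_of_exponent_le hk (by linarith)))
          (by linarith)
    _ = 1 := by rw [rpow_neg_one, mul_inv_cancel₀ (by positivity)]

lemma rpow_one_sub_le_two_mul {q x β : ℝ} (hq : 0 < q) (hx : 0 < x) (hβ : β ≤ 2) :
    (x / (2 * q)) ^ (1 - β) ≤ 2 * (q / x) ^ (β - 1) := by
  rw [show 1 - β = -(β - 1) by ring, rpow_neg (by positivity), ← inv_rpow (by positivity), inv_div,
    mul_div_assoc, mul_rpow zero_le_two (by positivity)]
  gcongr
  calc (2 : ℝ) ^ (β - 1) ≤ 2 ^ (1 : ℝ) := rpow_le_rpow_of_exponent_le one_le_two (by linarith)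
    _ = 2 := rpow_one 2

lemma low_range_term_le {c q k s₀ : ℝ} {h : ℕ} (hh : 5 ≤ h) (hq : 0 < q) (hqc : q ≤ c)
    (hkq : k * q ≤ 1) (hkh : (h : ℝ) ^ 3 * s₀ ^ (h - 1) ≤ k) (hq1 : q ≤ 1) :
    h / q * (h / (2 * q) * (q ^ h * s₀ ^ (h - 1))) ≤ c * (q / h) := by
  have hh0 : (0 : ℝ) < h := by positivity
  have hpow : q ^ h = q ^ 4 * q ^ (h - 4) := by rw [← pow_add, Nat.add_sub_cancel' (by omega)]
  have hq4 : q ^ (h - 4) ≤ q := pow_le_of_le_one hq.le hq1 (by omega)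
  calc h / q * (h / (2 * q) * (q ^ h * s₀ ^ (h - 1)))
      = ((h : ℝ) ^ 3 * s₀ ^ (h - 1) * q) * q ^ (h - 4) * (q / h) / 2 := by
        rw [hpow]; field_simp
    _ ≤ 1 * q * (q / h) / 2 := by
        gcongr
        exact (mul_le_mul_of_nonneg_right hkh hq.le).trans hkq
    _ ≤ c * (q / h) := by
        have := div_pos hq hh0
        nlinarith

lemma mid_range_term_le {c q T β : ℝ} {h : ℕ} (hh : 6 ≤ h) (hc : 0 ≤ c) (hq : 0 < q)
    (hT : 0 < T) (hqT : q * T = h / 2) :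
    h / q * (T * (c * q ^ h * T ^ ((h - 1 : ℕ) - β) * exp (-(q * T)) / (h - 1)!)) ≤
      5 * c * T ^ (1 - β) := by
  have hTpow : T * T ^ ((h - 1 : ℕ) - β) = T ^ (h - 1) * T ^ (1 - β) := by
    rw [mul_comm, ← rpow_add_one hT.ne', ← rpow_natCast, ← rpow_add hT]
    ring_nf
  have hqpow : q ^ h = q * q ^ (h - 1) := by rw [← pow_succ', Nat.sub_add_cancel (by omega)]
  calc h / q * (T * (c * q ^ h * T ^ ((h - 1 : ℕ) - β) * exp (-(q * T)) / (h - 1)!))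
      = c * T ^ (1 - β) * (h * (q * T) ^ (h - 1) * exp (-(q * T)) / (h - 1)!) := by
        rw [show T * (c * q ^ h * T ^ ((h - 1 : ℕ) - β) * exp (-(q * T)) / (h - 1)!) =
          c * q ^ h * (T * T ^ ((h - 1 : ℕ) - β)) * exp (-(q * T)) / (h - 1)! by ring,
          hTpow, hqpow, mul_pow]
        field_simp
    _ ≤ c * T ^ (1 - β) * 5 := by
        rw [hqT]
        gcongr
        exact mul_half_pow_mul_exp_div_factorial_le hh
    _ = 5 * c * T ^ (1 - β) := by ring

theorem decay_of_tails_jsq_stmt13_general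
    (D : ℕ) (hD : 2 ≤ D) (c₂ s₀ : ℝ) (hc₂ : 0 < c₂) (hs₀ : 1 ≤ s₀)
    (F : Measure ℝ) [IsProbabilityMeasure F]
    (hsupp : F (Set.Ici (0:ℝ))ᶜ = 0)
    (htail : ∀ s : ℝ, s₀ ≤ s →
      F (Set.Ioi s) ≤ ENNReal.ofReal (c₂ * s ^ (-((D:ℝ) / ((D:ℝ) - 1)))))
    (h : ℕ) (hh : 6 ≤ h) (k : ℝ)
    (hk : (D:ℝ) * max c₂ c₂⁻¹ * s₀ ^ (2 * h) * (h:ℝ) ^ (h + 1) ≤ k)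
    (q : ℝ) (hq0 : 0 < q)
    (hq : q ≤ min c₂ (k ^ (-(((D:ℝ) - 1) * ((h:ℝ) + 1))))) :
    ∫ s, (k + s) * jsqPoissonTail q h s ∂F ≤
      55 * (D:ℝ) * c₂ * (q / (h:ℝ)) ^ (1 / ((D:ℝ) - 1)) := by
  have hD' : (2 : ℝ) ≤ D := by exact_mod_cast hD
  have hh' : (6 : ℝ) ≤ h := by exact_mod_cast hh
  obtain ⟨hβ1, hβ2, hγ, hβD⟩ := div_sub_one_bounds hD'
  set β : ℝ := D / (D - 1)
  obtain ⟨hqc, hqk⟩ := le_min_iff.1 hq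
  have hkh := pow_three_mul_pow_le_of_le (by linarith) hc₂ hs₀ (by omega) hk
  have hs₀k : s₀ ≤ k := (le_self_pow₀ hs₀ (by omega)).trans
    ((le_mul_of_one_le_left (by positivity) (one_le_pow₀ (by linarith))).trans hkh)
  have hkq : k * q ≤ 1 := mul_le_one_of_le_rpow_neg (by nlinarith) (by nlinarith) hqk
  have hq1 : q ≤ 1 := by nlinarith
  have hqT : q * (h / (2 * q)) = h / 2 := by field_simp
  set T : ℝ := h / (2 * q)
  have hkT : k ≤ T := by rw [le_div_iff₀ (by positivity)]; nlinarith
  refine (integral_mul_jsqPoissonTail_le F (ae_iff.2 hsupp) hc₂.le hβ1 (by linarith)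
    (hs₀k.trans hkT) htail hq0 (by linarith) hkT (by omega) ?_ ?_).trans ?_
  · rw [le_div_iff₀ hq0, add_mul, mul_comm T q, hqT]; linarith
  · rw [hqT, Nat.cast_sub (by omega)]; push_cast; linarith
  have hlow := low_range_term_le (by omega) hq0 hqc hkq hkh hq1
  have hmid := mid_range_term_le (β := β) hh hc₂.le hq0 (by positivity) hqT
  have hT : T ^ (1 - β) ≤ 2 * (q / h) ^ (β - 1) := rpow_one_sub_le_two_mul hq0 (by positivity) hβ2
  have hX := self_le_rpow_of_le_one (by positivity : 0 ≤ q / h)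
    ((div_le_one (by positivity)).2 (by linarith)) (show β - 1 ≤ 1 by linarith)
  have hX0 : 0 ≤ c₂ * (q / h) ^ (β - 1) := by positivity
  rw [hβD, hγ, mul_add, mul_add]
  nlinarith [mul_le_mul_of_nonneg_left hX hc₂.le, mul_le_mul_of_nonneg_left hT hc₂.le]

/-- Bound for the trivial partition in the critical case `β = D/(D-1)`: if `F` is a
probability measure on `[0,∞)` with mean `1` and tail `F((s,∞)) ≤ c₂ s^{-D/(D-1)}`
for `s ≥ s₀`, `h ≥ 6`, `k ≥ D max(c₂, 1/c₂) s₀^{2h} h^{h+1}` and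
`0 < q ≤ min(c₂, k^{-(D-1)(h+1)})`, then
`∫₀^∞ (k+s) J_h(s) dF(s) ≤ 55 D c₂ (q/h)^{1/(D-1)}`. -/
theorem decay_of_tails_jsq_stmt13
    (D : ℕ) (hD : 2 ≤ D) (c₂ s₀ : ℝ) (hc₂ : 0 < c₂) (hs₀ : 1 ≤ s₀)
    (F : Measure ℝ) [IsProbabilityMeasure F]
    (hsupp : F (Set.Ici (0:ℝ))ᶜ = 0) (hmean : ∫ s, s ∂F = 1)
    (htail : ∀ s : ℝ, s₀ ≤ s →
      F (Set.Ioi s) ≤ ENNReal.ofReal (c₂ * s ^ (-((D:ℝ) / ((D:ℝ) - 1)))))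
    (h : ℕ) (hh : 6 ≤ h) (k : ℝ)
    (hk : (D:ℝ) * max c₂ c₂⁻¹ * s₀ ^ (2 * h) * (h:ℝ) ^ (h + 1) ≤ k)
    (q : ℝ) (hq0 : 0 < q)
    (hq : q ≤ min c₂ (k ^ (-(((D:ℝ) - 1) * ((h:ℝ) + 1))))) :
    ∫ s, (k + s) * jsqPoissonTail q h s ∂F ≤
      55 * (D:ℝ) * c₂ * (q / (h:ℝ)) ^ (1 / ((D:ℝ) - 1)) :=
  decay_of_tails_jsq_stmt13_general D hD c₂ s₀ hc₂ hs₀ F hsupp htail h hh k hk q hq0 hq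
end

section
/- Let β > 1 and s₀ ≥ 1 be reals, let F be a Borel probability measure on [0,∞) with mean ∫ s dF(s) = 1 and tail F((s,∞)) ≤ s^{-β} for all s ≥ s₀, and let L : [0,∞) → [0,1] be a nondecreasing function. Then for every real k ≥ 1, ∫_0^{∞} (k+s) L(s) dF(s) ≤ 2β (s₀^{β+1} + 1) · k · ∫_1^{∞} s^{-β} L(s) ds. -/
/-!
Split the integral at `s₀`. On `[0, s₀]` the integrand is at most `(k + s₀) L(s₀)`, and
monotonicity of `L` gives `L(s₀) ≤ (β - 1) s₀^{β-1} ∫_{s₀}^∞ t^{-β} L(t) dt`. On `(s₀, ∞)` the tail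
bound says that `F` is stochastically dominated by the measure with density `β t^{-β-1}` on
`(s₀, ∞)`, whose tails are exactly `c^{-β}`; by the layer-cake formula the integral of the
monotone function `(k + s) L(s)` can only grow under this domination, and
`β t^{-β-1} (k + t) ≤ 2 k β t^{-β}` for `t, k ≥ 1`.
-/

open Filter Topology MeasureTheory Set

namespace MeasureTheory.Measure

variable {μ ν : Measure ℝ}

theorem measure_Ici_le_of_forall_measure_Ioi_le [IsFiniteMeasure ν]
    (h : ∀ c, μ (Ioi c) ≤ ν (Ioi c)) (c : ℝ) : μ (Ici c) ≤ ν (Ici c) := by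
  have hIci : ⋂ r > (0 : ℝ), Ioi (c - r) = Ici c := by
    ext x
    simp only [mem_iInter, mem_Ioi, mem_Ici]
    refine ⟨fun hx => le_of_forall_pos_lt_add fun r hr => by linarith [hx r hr],
      fun hx r hr => by linarith⟩
  have hν : Tendsto (fun r => ν (Ioi (c - r))) (𝓝[>] 0) (𝓝 (ν (Ici c))) := by
    rw [← hIci]
    exact tendsto_measure_biInter_gt (fun _ _ => measurableSet_Ioi.nullMeasurableSet)
      (fun i j _ hij => Ioi_subset_Ioi (by linarith)) ⟨1, one_pos, measure_ne_top _ _⟩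
  refine ge_of_tendsto hν (eventually_nhdsWithin_of_forall fun r (hr : 0 < r) => ?_)
  exact (measure_mono (Ici_subset_Ioi.2 (by linarith))).trans (h _)

theorem measure_univ_le_of_forall_measure_Ioi_le (h : ∀ c, μ (Ioi c) ≤ ν (Ioi c)) :
    μ univ ≤ ν univ :=
  le_of_tendsto' (tendsto_measure_Ici_atBot μ) fun c =>
    (measure_mono (Ici_subset_Ioi.2 (sub_one_lt c))).trans
      ((h _).trans (measure_mono (subset_univ _)))

/-- An upper set of `ℝ` is `∅`, `univ`, `Ioi (sInf U)` or `Ici (sInf U)`. -/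
theorem _root_.IsUpperSet.measure_le_of_forall_measure_Ioi_le [IsFiniteMeasure ν]
    (h : ∀ c, μ (Ioi c) ≤ ν (Ioi c)) {U : Set ℝ} (hU : IsUpperSet U) : μ U ≤ ν U := by
  rcases U.eq_empty_or_nonempty with rfl | hne
  · simp
  by_cases hbdd : BddBelow U
  swap
  · have : U = univ := eq_univ_of_forall fun x => by
      obtain ⟨y, hyU, hyx⟩ := not_bddBelow_iff.1 hbdd x
      exact hU hyx.le hyU
    exact this ▸ measure_univ_le_of_forall_measure_Ioi_le h
  have hUIci : U ⊆ Ici (sInf U) := fun x hx => csInf_le hbdd hx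
  by_cases hc : sInf U ∈ U
  · calc μ U ≤ μ (Ici (sInf U)) := measure_mono hUIci
      _ ≤ ν (Ici (sInf U)) := measure_Ici_le_of_forall_measure_Ioi_le h _
      _ ≤ ν U := measure_mono (hU.Ici_subset hc)
  · have hIoiU : Ioi (sInf U) ⊆ U := fun y hy => by
      obtain ⟨x, hxU, hxy⟩ := (csInf_lt_iff hbdd hne).1 hy
      exact hU hxy.le hxU
    calc μ U ≤ μ (Ioi (sInf U)) :=
          measure_mono fun x hx => show sInf U < x from
            (hUIci hx).lt_of_ne (by rintro rfl; exact hc hx)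
      _ ≤ ν (Ioi (sInf U)) := h _
      _ ≤ ν U := measure_mono hIoiU

theorem lintegral_ofReal_le_of_forall_measure_Ioi_le [IsFiniteMeasure ν]
    (h : ∀ c, μ (Ioi c) ≤ ν (Ioi c)) {g : ℝ → ℝ} (hg : Monotone g) (hg0 : 0 ≤ g) :
    ∫⁻ x, ENNReal.ofReal (g x) ∂μ ≤ ∫⁻ x, ENNReal.ofReal (g x) ∂ν := by
  rw [lintegral_eq_lintegral_meas_lt μ (.of_forall hg0) hg.measurable.aemeasurable,
    lintegral_eq_lintegral_meas_lt ν (.of_forall hg0) hg.measurable.aemeasurable]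
  exact lintegral_mono fun t =>
    (isUpperSet_Ioi t).preimage hg |>.measure_le_of_forall_measure_Ioi_le h

end MeasureTheory.Measure

theorem setLIntegral_Iic_le_of_monotone {F : Measure ℝ} [IsProbabilityMeasure F]
    {f : ℝ → ENNReal} (hf : Monotone f) (c : ℝ) : ∫⁻ x in Iic c, f x ∂F ≤ f c :=
  calc ∫⁻ x in Iic c, f x ∂F ≤ ∫⁻ _ in Iic c, f c ∂F :=
        setLIntegral_mono' measurableSet_Iic fun _ hx => hf hx
    _ = f c * F (Iic c) := setLIntegral_const _ _
    _ ≤ f c := mul_le_of_le_one_right' prob_le_one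

variable {β a : ℝ}

theorem rpow_neg_sub_one_mul_add_le {t k : ℝ} (ht : 1 ≤ t) (hk : 1 ≤ k) :
    t ^ (-β - 1) * (k + t) ≤ 2 * k * t ^ (-β) := by
  have ht0 : 0 < t := one_pos.trans_le ht
  have hpow : 0 ≤ t ^ (-β) := Real.rpow_nonneg ht0.le _
  rw [Real.rpow_sub_one ht0.ne']
  calc t ^ (-β) / t * (k + t) = k * (t ^ (-β) / t) + t ^ (-β) := by field_simp
    _ ≤ k * t ^ (-β) + k * t ^ (-β) := by
        gcongr
        · exact div_le_self hpow ht
        · exact le_mul_of_one_le_left hpow hk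
    _ = 2 * k * t ^ (-β) := by ring

theorem integrableOn_rpow_neg_mul (hβ : 1 < β) (ha : 0 < a) {L : ℝ → ℝ} (hLm : Measurable L)
    (hL : ∀ t, ‖L t‖ ≤ 1) : IntegrableOn (fun t => t ^ (-β) * L t) (Ioi a) := by
  refine (integrableOn_Ioi_rpow_of_lt (by linarith : -β < -1) ha).mono' (by fun_prop) ?_
  filter_upwards [ae_restrict_mem measurableSet_Ioi] with t (ht : a < t)
  rw [norm_mul, Real.norm_of_nonneg (Real.rpow_nonneg (ha.trans ht).le _)]
  exact mul_le_of_le_one_right (Real.rpow_nonneg (ha.trans ht).le _) (hL t)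

theorem apply_le_mul_setIntegral_rpow_mul (hβ : 1 < β) (ha : 0 < a) {L : ℝ → ℝ}
    (hL : MonotoneOn L (Ici a)) (hint : IntegrableOn (fun t => t ^ (-β) * L t) (Ioi a)) :
    L a ≤ (β - 1) * a ^ (β - 1) * ∫ t in Ioi a, t ^ (-β) * L t := by
  have hconst : ∫ t in Ioi a, t ^ (-β) * L a = a ^ (1 - β) / (β - 1) * L a := by
    rw [integral_mul_const, integral_Ioi_rpow_of_lt (by linarith) ha, ← neg_div_neg_eq]
    ring_nf
  have hmono : ∫ t in Ioi a, t ^ (-β) * L a ≤ ∫ t in Ioi a, t ^ (-β) * L t :=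
    setIntegral_mono_on ((integrableOn_Ioi_rpow_of_lt (by linarith) ha).mul_const _) hint
      measurableSet_Ioi fun t ht => mul_le_mul_of_nonneg_left
        (hL self_mem_Ici (mem_Ici.2 (le_of_lt ht)) (le_of_lt ht))
        (Real.rpow_nonneg (ha.trans ht).le _)
  have hcancel : a ^ (β - 1) * a ^ (1 - β) = 1 := by
    rw [← Real.rpow_add ha]; norm_num
  have hβ1 : β - 1 ≠ 0 := by linarith
  calc L a = (β - 1) / (β - 1) * (a ^ (β - 1) * a ^ (1 - β)) * L a := by
        rw [div_self hβ1, hcancel, one_mul, one_mul]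
    _ = (β - 1) * a ^ (β - 1) * (a ^ (1 - β) / (β - 1) * L a) := by ring
    _ ≤ (β - 1) * a ^ (β - 1) * ∫ t in Ioi a, t ^ (-β) * L t := by
        rw [← hconst]
        exact mul_le_mul_of_nonneg_left hmono
          (mul_nonneg (by linarith) (Real.rpow_nonneg ha.le _))

theorem add_mul_apply_le_mul_setIntegral_rpow_mul (hβ : 1 < β) (ha : 1 ≤ a) {k : ℝ}
    (hk : 1 ≤ k) {L : ℝ → ℝ} (hL : MonotoneOn L (Ici a)) (hLa : 0 ≤ L a)
    (hint : IntegrableOn (fun t => t ^ (-β) * L t) (Ioi a)) :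
    (k + a) * L a ≤ 2 * k * (β - 1) * a ^ β * ∫ t in Ioi a, t ^ (-β) * L t := by
  have ha0 : 0 < a := one_pos.trans_le ha
  calc (k + a) * L a ≤ 2 * k * a * L a := mul_le_mul_of_nonneg_right (by nlinarith) hLa
    _ ≤ 2 * k * a * ((β - 1) * a ^ (β - 1) * ∫ t in Ioi a, t ^ (-β) * L t) :=
        mul_le_mul_of_nonneg_left (apply_le_mul_setIntegral_rpow_mul hβ ha0 hL hint)
          (by positivity)
    _ = 2 * k * (β - 1) * a ^ β * ∫ t in Ioi a, t ^ (-β) * L t := by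
        rw [Real.rpow_sub_one ha0.ne']
        field_simp

/-- `a ^ (-β)` times `ProbabilityTheory.paretoMeasure a β`. -/
noncomputable def powerTailMeasure (β a : ℝ) : Measure ℝ :=
  (volume.restrict (Ioi a)).withDensity fun t => ENNReal.ofReal (β * t ^ (-β - 1))

theorem integrableOn_const_mul_rpow_neg_sub_one (hβ : 0 < β) {c : ℝ} (hc : 0 < c) :
    IntegrableOn (fun t : ℝ => β * t ^ (-β - 1)) (Ioi c) :=
  (integrableOn_Ioi_rpow_of_lt (by linarith) hc).const_mul β

theorem isFiniteMeasure_powerTailMeasure (hβ : 0 < β) (ha : 0 < a) :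
    IsFiniteMeasure (powerTailMeasure β a) :=
  isFiniteMeasure_withDensity_ofReal (integrableOn_const_mul_rpow_neg_sub_one hβ ha).2

theorem powerTailMeasure_Ioi (hβ : 0 < β) (ha : 0 < a) (c : ℝ) :
    powerTailMeasure β a (Ioi c) = ENNReal.ofReal (max c a ^ (-β)) := by
  have hm : 0 < max c a := lt_max_of_lt_right ha
  rw [powerTailMeasure, withDensity_apply _ measurableSet_Ioi,
    Measure.restrict_restrict measurableSet_Ioi, Ioi_inter_Ioi,
    ← ofReal_integral_eq_lintegral_ofReal (integrableOn_const_mul_rpow_neg_sub_one hβ hm)]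
  · rw [integral_const_mul, integral_Ioi_rpow_of_lt (by linarith) hm, sub_add_cancel]
    field_simp
  · filter_upwards [ae_restrict_mem measurableSet_Ioi] with t ht
    exact mul_nonneg hβ.le (Real.rpow_nonneg (hm.trans ht).le _)

theorem lintegral_powerTailMeasure (f : ℝ → ENNReal) (hf : Measurable f) :
    ∫⁻ t, f t ∂powerTailMeasure β a =
      ∫⁻ t in Ioi a, ENNReal.ofReal (β * t ^ (-β - 1)) * f t :=
  lintegral_withDensity_eq_lintegral_mul _
    (ENNReal.measurable_ofReal.comp (measurable_const.mul (measurable_id.pow_const _))) hf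

theorem setLIntegral_Ioi_le_lintegral_powerTailMeasure (hβ : 0 < β) (ha : 0 < a)
    {F : Measure ℝ} (htail : ∀ s, a ≤ s → F (Ioi s) ≤ ENNReal.ofReal (s ^ (-β)))
    {g : ℝ → ℝ} (hg : Monotone g) (hg0 : 0 ≤ g) :
    ∫⁻ x in Ioi a, ENNReal.ofReal (g x) ∂F ≤
      ∫⁻ x, ENNReal.ofReal (g x) ∂powerTailMeasure β a := by
  have := isFiniteMeasure_powerTailMeasure hβ ha
  refine Measure.lintegral_ofReal_le_of_forall_measure_Ioi_le (fun c => ?_) hg hg0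
  rw [Measure.restrict_apply measurableSet_Ioi, Ioi_inter_Ioi, powerTailMeasure_Ioi hβ ha]
  exact htail _ (le_max_right _ _)

theorem lintegral_powerTailMeasure_le (hβ : 0 ≤ β) (ha : 1 ≤ a) {k : ℝ} (hk : 1 ≤ k)
    {L : ℝ → ℝ} (hLm : Measurable L) (hL0 : 0 ≤ L)
    (hint : IntegrableOn (fun t => t ^ (-β) * L t) (Ioi a)) :
    ∫⁻ t, ENNReal.ofReal ((k + max t 0) * L t) ∂powerTailMeasure β a ≤
      ENNReal.ofReal (2 * k * β * ∫ t in Ioi a, t ^ (-β) * L t) := by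
  rw [lintegral_powerTailMeasure _ (by fun_prop), ← integral_const_mul,
    ofReal_integral_eq_lintegral_ofReal (hint.const_mul _)]
  · refine setLIntegral_mono' measurableSet_Ioi fun t (ht : a < t) => ?_
    have ht1 : 1 ≤ t := ha.trans ht.le
    have ht0 : 0 ≤ t := zero_le_one.trans ht1
    rw [← ENNReal.ofReal_mul (mul_nonneg hβ (Real.rpow_nonneg ht0 _)), max_eq_left ht0]
    refine ENNReal.ofReal_le_ofReal ?_
    calc β * t ^ (-β - 1) * ((k + t) * L t) = β * (t ^ (-β - 1) * (k + t)) * L t := by ring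
      _ ≤ β * (2 * k * t ^ (-β)) * L t :=
          mul_le_mul_of_nonneg_right
            (mul_le_mul_of_nonneg_left (rpow_neg_sub_one_mul_add_le ht1 hk) hβ) (hL0 t)
      _ = 2 * k * β * (t ^ (-β) * L t) := by ring
  · filter_upwards [ae_restrict_mem measurableSet_Ioi] with t (ht : a < t)
    exact mul_nonneg (by positivity) (mul_nonneg
      (Real.rpow_nonneg (zero_le_one.trans (ha.trans ht.le)) _) (hL0 t))

/-- `k + max s 0` rather than `k + s` makes the integrand monotone on all of `ℝ`. -/
theorem lintegral_add_max_mul_le_of_measure_Ioi_le (hβ : 1 < β) {s₀ : ℝ} (hs₀ : 1 ≤ s₀)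
    {F : Measure ℝ} [IsProbabilityMeasure F]
    (htail : ∀ s, s₀ ≤ s → F (Ioi s) ≤ ENNReal.ofReal (s ^ (-β)))
    {L : ℝ → ℝ} (hL : Monotone L) (hL0 : 0 ≤ L)
    (hint : IntegrableOn (fun t => t ^ (-β) * L t) (Ioi s₀)) {k : ℝ} (hk : 1 ≤ k) :
    ∫⁻ s, ENNReal.ofReal ((k + max s 0) * L s) ∂F ≤
      ENNReal.ofReal (2 * β * (s₀ ^ (β + 1) + 1) * k * ∫ t in Ioi s₀, t ^ (-β) * L t) := by
  set J := ∫ t in Ioi s₀, t ^ (-β) * L t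
  have hs₀0 : 0 < s₀ := one_pos.trans_le hs₀
  have hg : Monotone fun s => (k + max s 0) * L s :=
    (monotone_const.add (monotone_id.max monotone_const)).mul hL
      (fun s => by positivity) hL0
  have hg0 : 0 ≤ fun s => (k + max s 0) * L s := fun s => mul_nonneg (by positivity) (hL0 s)
  have hJ0 : 0 ≤ J := setIntegral_nonneg measurableSet_Ioi fun t (ht : s₀ < t) =>
    mul_nonneg (Real.rpow_nonneg (hs₀0.trans ht).le _) (hL0 t)
  have hlow : (k + max s₀ 0) * L s₀ ≤ 2 * k * (β - 1) * s₀ ^ β * J := by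
    rw [max_eq_left hs₀0.le]
    exact add_mul_apply_le_mul_setIntegral_rpow_mul hβ hs₀ hk (hL.monotoneOn _) (hL0 s₀) hint
  have hcoef : (β - 1) * s₀ ^ β ≤ β * s₀ ^ (β + 1) := by
    rw [Real.rpow_add_one hs₀0.ne']
    have hβs₀ : 0 ≤ β * (s₀ - 1) + 1 := by nlinarith
    nlinarith [mul_nonneg (Real.rpow_nonneg hs₀0.le β) hβs₀]
  rw [← lintegral_add_compl _ measurableSet_Iic, compl_Iic]
  calc _ ≤ ENNReal.ofReal ((k + max s₀ 0) * L s₀) +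
        ∫⁻ x, ENNReal.ofReal ((k + max x 0) * L x) ∂powerTailMeasure β s₀ :=
        add_le_add (setLIntegral_Iic_le_of_monotone (ENNReal.ofReal_mono.comp hg) s₀)
          (setLIntegral_Ioi_le_lintegral_powerTailMeasure (by linarith) hs₀0 htail hg hg0)
    _ ≤ ENNReal.ofReal (2 * k * (β - 1) * s₀ ^ β * J) + ENNReal.ofReal (2 * k * β * J) :=
        add_le_add (ENNReal.ofReal_le_ofReal hlow)
          (lintegral_powerTailMeasure_le (by linarith) hs₀ hk hL.measurable hL0 hint)
    _ = ENNReal.ofReal (2 * k * (β - 1) * s₀ ^ β * J + 2 * k * β * J) :=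
        (ENNReal.ofReal_add (by positivity) (by positivity)).symm
    _ ≤ _ := ENNReal.ofReal_le_ofReal <| by
        nlinarith [mul_le_mul_of_nonneg_left hcoef (by positivity : 0 ≤ 2 * k * J)]

theorem decay_of_tails_jsq_stmt19_general
    (β s₀ : ℝ) (hβ : 1 < β) (hs₀ : 1 ≤ s₀)
    (F : Measure ℝ) [IsProbabilityMeasure F]
    (hsupp : F (Set.Ici (0:ℝ))ᶜ = 0)
    (htail : ∀ s : ℝ, s₀ ≤ s → F (Set.Ioi s) ≤ ENNReal.ofReal (s ^ (-β)))
    (L : ℝ → ℝ) (hLmono : MonotoneOn L (Set.Ici (0:ℝ)))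
    (hLrange : ∀ s : ℝ, 0 ≤ s → L s ∈ Set.Icc (0:ℝ) 1) :
    ∀ k : ℝ, 1 ≤ k →
      ∫ s, (k + s) * L s ∂F ≤
        2 * β * (s₀ ^ (β + 1) + 1) * k * ∫ s in Set.Ioi (1:ℝ), s ^ (-β) * L s := by
  intro k hk
  -- `L` is only controlled on `[0, ∞)`, where `F` lives; extend it to `ℝ` by `L 0`.
  set L' := fun s => L (max s 0)
  have hL' : Monotone L' := fun a b hab =>
    hLmono (le_max_right a 0) (le_max_right b 0) (max_le_max hab le_rfl)
  have hL'0 : 0 ≤ L' := fun s => (hLrange _ (le_max_right s 0)).1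
  have hL'1 : ∀ s, ‖L' s‖ ≤ 1 := fun s => by
    rw [Real.norm_of_nonneg (hL'0 s)]
    exact (hLrange _ (le_max_right s 0)).2
  have hint := integrableOn_rpow_neg_mul hβ one_pos hL'.measurable hL'1
  have hF : ∫ s, (k + s) * L s ∂F = ∫ s, (k + max s 0) * L' s ∂F := by
    refine integral_congr_ae ?_
    filter_upwards [measure_eq_zero_iff_ae_notMem.1 hsupp] with s hs
    simp only [L', max_eq_left (notMem_compl_iff.1 hs)]
  have hI : ∫ s in Ioi (1 : ℝ), s ^ (-β) * L s = ∫ s in Ioi 1, s ^ (-β) * L' s :=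
    setIntegral_congr_fun measurableSet_Ioi fun s (hs : 1 < s) => by
      simp only [L', max_eq_left (zero_le_one.trans hs.le)]
  have hnn : ∀ t ∈ Ioi (1 : ℝ), 0 ≤ t ^ (-β) * L' t := fun t (ht : 1 < t) =>
    mul_nonneg (Real.rpow_nonneg (one_pos.trans ht).le _) (hL'0 t)
  have hJI : ∫ s in Ioi s₀, s ^ (-β) * L' s ≤ ∫ s in Ioi 1, s ^ (-β) * L' s :=
    setIntegral_mono_set hint (ae_restrict_of_forall_mem measurableSet_Ioi hnn)
      (Ioi_subset_Ioi hs₀).eventuallyLE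
  have hI0 : 0 ≤ ∫ s in Ioi 1, s ^ (-β) * L' s := setIntegral_nonneg measurableSet_Ioi hnn
  rw [hF, hI, integral_eq_lintegral_of_nonneg_ae
    (.of_forall fun s => mul_nonneg (by positivity) (hL'0 s))
    (by have := hL'.measurable; fun_prop)]
  refine ENNReal.toReal_le_of_le_ofReal (by positivity) ?_
  refine (lintegral_add_max_mul_le_of_measure_Ioi_le hβ hs₀ htail hL' hL'0
    (hint.mono_set (Ioi_subset_Ioi hs₀)) hk).trans (ENNReal.ofReal_le_ofReal ?_)
  exact mul_le_mul_of_nonneg_left hJI (by positivity)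

/-- Reduction of the expected-occupation-time estimate to a deterministic integral:
if `F` is a probability measure on `[0,∞)` with mean `1` and tail
`F((s,∞)) ≤ s^{-β}` for `s ≥ s₀`, and `L : [0,∞) → [0,1]` is nondecreasing, then
for every `k ≥ 1`,
`∫₀^∞ (k+s) L(s) dF(s) ≤ 2β (s₀^{β+1} + 1) k ∫₁^∞ s^{-β} L(s) ds`. -/
theorem decay_of_tails_jsq_stmt19
    (β s₀ : ℝ) (hβ : 1 < β) (hs₀ : 1 ≤ s₀)
    (F : Measure ℝ) [IsProbabilityMeasure F]
    (hsupp : F (Set.Ici (0:ℝ))ᶜ = 0) (hmean : ∫ s, s ∂F = 1)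
    (htail : ∀ s : ℝ, s₀ ≤ s → F (Set.Ioi s) ≤ ENNReal.ofReal (s ^ (-β)))
    (L : ℝ → ℝ) (hLmono : MonotoneOn L (Set.Ici (0:ℝ)))
    (hLrange : ∀ s : ℝ, 0 ≤ s → L s ∈ Set.Icc (0:ℝ) 1) :
    ∀ k : ℝ, 1 ≤ k →
      ∫ s, (k + s) * L s ∂F ≤
        2 * β * (s₀ ^ (β + 1) + 1) * k * ∫ s in Set.Ioi (1:ℝ), s ^ (-β) * L s :=
  decay_of_tails_jsq_stmt19_general β s₀ hβ hs₀ F hsupp htail L hLmono hLrange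
end
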